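/- arXiv:1305.1535 — 8 statements merged into one kernel-verified Lean document; each statement's English description precedes it below -/
import Mathlib

section
/- Lovász Local Lemma (finite version): Let A_1,...,A_N be events in a probability space, each A_i determined by a finite set vbl(A_i) of mutually independent random variables. Call A_i and A_j neighbors if vbl(A_i) ∩ vbl(A_j) ≠ ∅. Suppose there are reals z_i ∈ (0,1) with Pr[A_i] ≤ z_i · ∏_{j ≠ i, A_j ∈ N(A_i)} (1 − z_j) for all i. Then Pr[none of the A_i occurs] ≥ ∏_i (1 − z_i) > 0. -/
open MeasureTheory ProbabilityTheory

/-- Lovász Local Lemma, finite version.  `m v` is the σ-algebra generated by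
the `v`-th random variable; the variables are mutually independent; event
`A i` is determined by the variables in `vbl i`; `j` is a neighbor of `i` if
`vbl i ∩ vbl j ≠ ∅`.  If `Pr[A i] ≤ z i · ∏_{j ≠ i, j ∈ N(i)} (1 - z j)` with
`z i ∈ (0,1)`, then the probability that no `A i` occurs is at least
`∏ i (1 - z i) > 0`. -/
theorem finite_lovasz_local_lemma
    {Ω : Type*} [inst : MeasurableSpace Ω] (μ : Measure Ω) [IsProbabilityMeasure μ]
    (N : ℕ) (m : ℕ → MeasurableSpace Ω) (hle : ∀ v, m v ≤ inst)
    (hindep : iIndep m μ)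
    (A : Fin N → Set Ω) (vbl : Fin N → Finset ℕ)
    (hA : ∀ i, MeasurableSet[⨆ v ∈ vbl i, m v] (A i))
    (z : Fin N → ℝ) (hz : ∀ i, z i ∈ Set.Ioo (0 : ℝ) 1)
    (hcond : ∀ i, (μ (A i)).toReal ≤
      z i * ∏ j ∈ Finset.univ.filter
        (fun j => j ≠ i ∧ (vbl i ∩ vbl j).Nonempty), (1 - z j)) :
    (∏ i, (1 - z i)) ≤ (μ (⋂ i, (A i)ᶜ)).toReal ∧
      0 < (μ (⋂ i, (A i)ᶜ)).toReal := by
  classical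
  -- basic measurability
  have hAm : ∀ i, MeasurableSet (A i) := fun i =>
    (iSup₂_le fun v _ => hle v : (⨆ v ∈ vbl i, m v) ≤ inst) _ (hA i)
  have hCm : ∀ S : Finset (Fin N), MeasurableSet (⋂ j ∈ S, (A j)ᶜ) := fun S =>
    MeasurableSet.biInter S.countable_toSet fun j _ => (hAm j).compl
  have hfin : ∀ s : Set Ω, μ s ≠ ⊤ := fun s => measure_ne_top μ s
  -- splitting identity
  have hsplit : ∀ (S : Finset (Fin N)) (i : Fin N),
      (μ (⋂ j ∈ insert i S, (A j)ᶜ)).toReal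
        = (μ (⋂ j ∈ S, (A j)ᶜ)).toReal - (μ (A i ∩ ⋂ j ∈ S, (A j)ᶜ)).toReal := by
    intro S i
    have h1 : (⋂ j ∈ insert i S, (A j)ᶜ) = (⋂ j ∈ S, (A j)ᶜ) \ A i := by
      rw [Finset.set_biInter_insert]
      ext x; simp [Set.mem_diff, and_comm]
    have h2 : μ ((⋂ j ∈ S, (A j)ᶜ) ∩ A i) + μ ((⋂ j ∈ S, (A j)ᶜ) \ A i)
        = μ (⋂ j ∈ S, (A j)ᶜ) := measure_inter_add_diff _ (hAm i)
    have h3 : (μ ((⋂ j ∈ S, (A j)ᶜ) ∩ A i)).toReal + (μ ((⋂ j ∈ S, (A j)ᶜ) \ A i)).toReal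
        = (μ (⋂ j ∈ S, (A j)ᶜ)).toReal := by
      rw [← ENNReal.toReal_add (hfin _) (hfin _), h2]
    rw [h1, Set.inter_comm]
    linarith
  -- key lemma by strong induction on card
  have key : ∀ (n : ℕ) (S : Finset (Fin N)), S.card = n → ∀ i, i ∉ S →
      (μ (A i ∩ ⋂ j ∈ S, (A j)ᶜ)).toReal ≤ z i * (μ (⋂ j ∈ S, (A j)ᶜ)).toReal := by
    intro n
    induction n using Nat.strong_induction_on with
    | _ n IH =>
    intro S hcard i hiS
    set S₁ := S.filter (fun j => (vbl i ∩ vbl j).Nonempty) with hS₁def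
    set S₂ := S.filter (fun j => ¬(vbl i ∩ vbl j).Nonempty) with hS₂def
    have hS2S : S₂ ⊆ S := Finset.filter_subset _ _
    have hunion : S₂ ∪ S₁ = S := by
      ext x
      simp only [hS₁def, hS₂def, Finset.mem_union, Finset.mem_filter]
      tauto
    -- independence of A i and the S₂-part
    have hdisj : Disjoint (↑(vbl i) : Set ℕ) (↑(S₂.biUnion vbl) : Set ℕ) := by
      rw [Set.disjoint_left]
      intro v hv hv'
      simp only [Finset.coe_biUnion, Set.mem_iUnion, Finset.mem_coe, Finset.coe_sort_coe] at hv'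
      obtain ⟨j, hj, hvj⟩ := hv'
      rw [hS₂def, Finset.mem_filter] at hj
      exact hj.2 ⟨v, Finset.mem_inter.2 ⟨hv, hvj⟩⟩
    have hindep' : Indep (⨆ v ∈ (↑(vbl i) : Set ℕ), m v)
        (⨆ v ∈ (↑(S₂.biUnion vbl) : Set ℕ), m v) μ :=
      indep_iSup_of_disjoint hle hindep hdisj
    have hC2m' : MeasurableSet[⨆ v ∈ (↑(S₂.biUnion vbl) : Set ℕ), m v] (⋂ j ∈ S₂, (A j)ᶜ) := by
      refine MeasurableSet.biInter S₂.countable_toSet fun j hj => MeasurableSet.compl ?_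
      have hle' : (⨆ v ∈ vbl j, m v) ≤ ⨆ v ∈ (↑(S₂.biUnion vbl) : Set ℕ), m v := by
        refine iSup₂_le fun v hv => ?_
        refine le_iSup₂ (f := fun (v : ℕ) (_ : v ∈ (↑(S₂.biUnion vbl) : Set ℕ)) => m v) v ?_
        simp only [Finset.coe_biUnion, Set.mem_iUnion, Finset.mem_coe, Finset.coe_sort_coe]
        exact ⟨j, hj, hv⟩
      exact hle' _ (hA j)
    have hAi' : MeasurableSet[⨆ v ∈ (↑(vbl i) : Set ℕ), m v] (A i) := by
      have : (⨆ v ∈ vbl i, m v) = ⨆ v ∈ (↑(vbl i) : Set ℕ), m v := by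
        simp only [Finset.mem_coe]
      rw [← this]; exact hA i
    have hprod : μ (A i ∩ ⋂ j ∈ S₂, (A j)ᶜ) = μ (A i) * μ (⋂ j ∈ S₂, (A j)ᶜ) :=
      ((Indep_iff _ _ _).1 hindep') _ _ hAi' hC2m'
    -- the peel lemma
    have hpeel : ∀ T : Finset (Fin N), T ⊆ S₁ →
        (∏ j ∈ T, (1 - z j)) * (μ (⋂ j ∈ S₂, (A j)ᶜ)).toReal
          ≤ (μ (⋂ j ∈ S₂ ∪ T, (A j)ᶜ)).toReal := by
      intro T
      induction T using Finset.induction_on with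
      | empty => simp
      | insert _ _ hjT =>
        rename_i j T' ihT'
        intro hsub
        have hjS₁ : j ∈ S₁ := hsub (Finset.mem_insert_self j T')
        have hT'sub : T' ⊆ S₁ := fun x hx => hsub (Finset.mem_insert_of_mem hx)
        have hjS : j ∈ S := (Finset.mem_filter.1 hjS₁).1
        have hjnot : j ∉ S₂ ∪ T' := by
          rw [Finset.mem_union]
          rintro (h | h)
          · exact (Finset.mem_filter.1 h).2 (Finset.mem_filter.1 hjS₁).2
          · exact hjT h
        have hsmall : (S₂ ∪ T').card < n := by
          have hsubS : S₂ ∪ T' ⊆ S.erase j := by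
            intro x hx
            rw [Finset.mem_erase]
            refine ⟨fun hxj => hjnot (hxj ▸ hx), ?_⟩
            rcases Finset.mem_union.1 hx with h | h
            · exact hS2S h
            · exact (Finset.mem_filter.1 (hT'sub h)).1
          calc (S₂ ∪ T').card ≤ (S.erase j).card := Finset.card_le_card hsubS
            _ < S.card := Finset.card_erase_lt_of_mem hjS
            _ = n := hcard
        have hIH := IH _ hsmall (S₂ ∪ T') rfl j hjnot
        have heq : S₂ ∪ insert j T' = insert j (S₂ ∪ T') := Finset.union_insert j S₂ T'
        rw [heq, hsplit]
        have hz1 : 0 ≤ 1 - z j := by linarith [(hz j).2]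
        have hprodnn : 0 ≤ ∏ k ∈ T', (1 - z k) :=
          Finset.prod_nonneg fun k _ => by linarith [(hz k).2]
        have := ihT' hT'sub
        rw [Finset.prod_insert hjT]
        nlinarith [ENNReal.toReal_nonneg (a := μ (⋂ j ∈ S₂ ∪ T', (A j)ᶜ))]
    -- main chain
    have h1 : (μ (A i ∩ ⋂ j ∈ S, (A j)ᶜ)).toReal ≤ (μ (A i ∩ ⋂ j ∈ S₂, (A j)ᶜ)).toReal := by
      refine ENNReal.toReal_mono (hfin _) (measure_mono (Set.inter_subset_inter_right _ ?_))
      exact Set.biInter_subset_biInter_left hS2S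
    have h2 : (μ (A i ∩ ⋂ j ∈ S₂, (A j)ᶜ)).toReal
        = (μ (A i)).toReal * (μ (⋂ j ∈ S₂, (A j)ᶜ)).toReal := by
      rw [hprod, ENNReal.toReal_mul]
    have hS₁sub : S₁ ⊆ Finset.univ.filter (fun j => j ≠ i ∧ (vbl i ∩ vbl j).Nonempty) := by
      intro j hj
      rw [Finset.mem_filter] at hj ⊢
      exact ⟨Finset.mem_univ j, fun hji => hiS (hji ▸ hj.1), hj.2⟩
    have h3 : (∏ j ∈ Finset.univ.filter (fun j => j ≠ i ∧ (vbl i ∩ vbl j).Nonempty), (1 - z j))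
        ≤ ∏ j ∈ S₁, (1 - z j) := by
      rw [← Finset.prod_sdiff hS₁sub]
      have hle1 : ∏ j ∈ Finset.univ.filter (fun j => j ≠ i ∧ (vbl i ∩ vbl j).Nonempty) \ S₁,
          (1 - z j) ≤ 1 :=
        Finset.prod_le_one (fun k _ => by linarith [(hz k).2]) (fun k _ => by linarith [(hz k).1])
      have hnn : 0 ≤ ∏ j ∈ S₁, (1 - z j) :=
        Finset.prod_nonneg fun k _ => by linarith [(hz k).2]
      nlinarith
    have hmu2nn : (0:ℝ) ≤ (μ (⋂ j ∈ S₂, (A j)ᶜ)).toReal := ENNReal.toReal_nonneg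
    have h4 : (μ (A i)).toReal ≤ z i * ∏ j ∈ S₁, (1 - z j) := by
      have := hcond i
      have hzinn : 0 ≤ z i := le_of_lt (hz i).1
      nlinarith
    have h5 := hpeel S₁ (le_refl _)
    rw [hunion] at h5
    have hzinn : 0 ≤ z i := le_of_lt (hz i).1
    calc (μ (A i ∩ ⋂ j ∈ S, (A j)ᶜ)).toReal
        ≤ (μ (A i)).toReal * (μ (⋂ j ∈ S₂, (A j)ᶜ)).toReal := h2 ▸ h1
      _ ≤ (z i * ∏ j ∈ S₁, (1 - z j)) * (μ (⋂ j ∈ S₂, (A j)ᶜ)).toReal := by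
          have hAnn : (0:ℝ) ≤ (μ (A i)).toReal := ENNReal.toReal_nonneg
          nlinarith
      _ = z i * ((∏ j ∈ S₁, (1 - z j)) * (μ (⋂ j ∈ S₂, (A j)ᶜ)).toReal) := by ring
      _ ≤ z i * (μ (⋂ j ∈ S, (A j)ᶜ)).toReal := by nlinarith
  -- lower bound by induction
  have lower : ∀ T : Finset (Fin N), (∏ i ∈ T, (1 - z i)) ≤ (μ (⋂ j ∈ T, (A j)ᶜ)).toReal := by
    intro T
    induction T using Finset.induction_on with
    | empty => simp
    | insert _ _ hiT =>
      rename_i i T ihT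
      have hk := key T.card T rfl i hiT
      rw [hsplit T i, Finset.prod_insert hiT]
      have hz1 : 0 ≤ 1 - z i := by linarith [(hz i).2]
      have hnn : 0 ≤ ∏ k ∈ T, (1 - z k) :=
        Finset.prod_nonneg fun k _ => by linarith [(hz k).2]
      nlinarith
  have hU : (⋂ i, (A i)ᶜ) = ⋂ j ∈ (Finset.univ : Finset (Fin N)), (A j)ᶜ := by simp
  have hprodpos : 0 < ∏ i, (1 - z i) :=
    Finset.prod_pos fun k _ => by linarith [(hz k).2]
  constructor
  · rw [hU]; exact lower Finset.univ
  · rw [hU]; exact lt_of_lt_of_le hprodpos (lower Finset.univ)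
end

section
/- Lovász Local Lemma (infinite version): Let A_1, A_2, ... be countably many events, each depending on a finite set of mutually independent finite-range random variables (x_i)_{i∈ℕ}, such that each A_i has finitely many neighbors. If there exist z_i ∈ (0,1) with Pr[A_i] ≤ z_i ∏_{j≠i, A_j ∈ N(A_i)} (1 − z_j) for all i, then there exists an assignment of values to all variables avoiding every A_i. -/
open MeasureTheory

set_option linter.unusedSectionVars false

section LLLaux

variable {X : ℕ → Type*} [∀ j, Fintype (X j)] [∀ j, MeasurableSpace (X j)]
  (μ : ∀ j, Measure (X j)) [∀ j, IsProbabilityMeasure (μ j)]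

/-- Restriction of an assignment on `t` to a subset `s`. -/
def LLLrestr {s t : Finset ℕ} (h : s ⊆ t) (f : ∀ j : (t : Finset ℕ), X j)
    (j : (s : Finset ℕ)) : X j :=
  f ⟨j.1, h j.2⟩

lemma LLLrestr_measurable {s t : Finset ℕ} (h : s ⊆ t) :
    Measurable (LLLrestr (X := X) h) :=
  measurable_pi_lambda _ fun _ => measurable_pi_apply _

/-- Reindexing a product measure along a subtype identification is measure preserving. -/
lemma LLL_mp_q {V u : Finset ℕ} (huV : u ⊆ V) (p : {k : ℕ // k ∈ V} → Prop)
    [DecidablePred p]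
    (hmem : ∀ k : {k : ℕ // k ∈ V}, p k ↔ k.1 ∈ u) :
    MeasurePreserving
      (fun (g : ∀ k : Subtype p, X k.1.1) (j : (u : Finset ℕ)) =>
        g ⟨⟨j.1, huV j.2⟩, (hmem _).2 j.2⟩)
      (Measure.pi fun k : Subtype p => μ k.1.1)
      (Measure.pi fun j : (u : Finset ℕ) => μ j) := by
  classical
  have hq : Measurable
      (fun (g : ∀ k : Subtype p, X k.1.1) (j : (u : Finset ℕ)) =>
        g ⟨⟨j.1, huV j.2⟩, (hmem _).2 j.2⟩) :=
    measurable_pi_lambda _ fun _ => measurable_pi_apply _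
  refine ⟨hq, ?_⟩
  symm
  apply Measure.pi_eq
  intro s hs
  rw [Measure.map_apply hq (MeasurableSet.univ_pi hs)]
  have hpre : (fun (g : ∀ k : Subtype p, X k.1.1) (j : (u : Finset ℕ)) =>
        g ⟨⟨j.1, huV j.2⟩, (hmem _).2 j.2⟩) ⁻¹' Set.pi Set.univ s =
      Set.pi Set.univ (fun k : Subtype p => s ⟨k.1.1, (hmem _).1 k.2⟩) := by
    ext g
    simp only [Set.mem_preimage, Set.mem_pi, Set.mem_univ, forall_true_left]
    constructor
    · intro hg k
      exact hg ⟨k.1.1, (hmem _).1 k.2⟩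
    · intro hg j
      exact hg ⟨⟨j.1, huV j.2⟩, (hmem _).2 j.2⟩
  rw [hpre, Measure.pi_pi]
  exact Fintype.prod_equiv
    ⟨fun k => ⟨k.1.1, (hmem _).1 k.2⟩, fun j => ⟨⟨j.1, huV j.2⟩, (hmem _).2 j.2⟩,
      fun _ => rfl, fun _ => rfl⟩
    _ _ (fun _ => rfl)


/-- Splitting map into restrictions to `t` and `V \ t`. -/
lemma LLL_map_pair {V t : Finset ℕ} (h : t ⊆ V) :
    Measure.map
      (fun f : ∀ j : (V : Finset ℕ), X j =>
        (LLLrestr h f, LLLrestr (Finset.sdiff_subset : V \ t ⊆ V) f))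
      (Measure.pi fun j : (V : Finset ℕ) => μ j)
    = (Measure.pi fun j : (t : Finset ℕ) => μ j).prod
        (Measure.pi fun j : ((V \ t : Finset ℕ) : Finset ℕ) => μ j) := by
  classical
  set p : {k : ℕ // k ∈ V} → Prop := fun k => k.1 ∈ t with hp
  have h1 := measurePreserving_piEquivPiSubtypeProd
    (fun j : (V : Finset ℕ) => μ j) p
  have h2 := LLL_mp_q (X := X) μ h p (fun k => Iff.rfl)
  have h3 := LLL_mp_q (X := X) μ (Finset.sdiff_subset : V \ t ⊆ V)
    (fun k => ¬ p k) (fun k => by simp [hp, Finset.mem_sdiff, k.2])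
  have hcomp : (fun f : ∀ j : (V : Finset ℕ), X j =>
        (LLLrestr h f, LLLrestr (Finset.sdiff_subset : V \ t ⊆ V) f)) =
      (Prod.map
        (fun (g : ∀ k : Subtype p, X k.1.1) (j : (t : Finset ℕ)) =>
          g ⟨⟨j.1, h j.2⟩, j.2⟩)
        (fun (g : ∀ k : Subtype fun k => ¬ p k, X k.1.1) (j : ((V \ t : Finset ℕ) : Finset ℕ)) =>
          g ⟨⟨j.1, Finset.sdiff_subset j.2⟩, (Finset.mem_sdiff.mp j.2).2⟩))
        ∘ (MeasurableEquiv.piEquivPiSubtypeProd (fun j : (V : Finset ℕ) => X j) p) := rfl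
  have hF := h2.measurable.prodMap h3.measurable
  have hmm := Measure.map_map hF
    (MeasurableEquiv.piEquivPiSubtypeProd (fun j : (V : Finset ℕ) => X j) p).measurable
    (μ := Measure.pi fun j : (V : Finset ℕ) => μ j)
  rw [hcomp, ← hmm, h1.map_eq, ← Measure.map_prod_map _ _ h2.measurable h3.measurable,
    h2.map_eq, h3.map_eq]

/-- Independence of events depending on disjoint sets of variables. -/
lemma LLL_indep {V t : Finset ℕ} (h : t ⊆ V)
    (B₁ : Set (∀ j : (t : Finset ℕ), X j)) (hB₁ : MeasurableSet B₁)
    (B₂ : Set (∀ j : ((V \ t : Finset ℕ) : Finset ℕ), X j)) (hB₂ : MeasurableSet B₂) :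
    Measure.pi (fun j : (V : Finset ℕ) => μ j)
        (LLLrestr h ⁻¹' B₁ ∩ LLLrestr (Finset.sdiff_subset : V \ t ⊆ V) ⁻¹' B₂)
      = Measure.pi (fun j : (t : Finset ℕ) => μ j) B₁ *
        Measure.pi (fun j : ((V \ t : Finset ℕ) : Finset ℕ) => μ j) B₂ := by
  have hpair : Measurable (fun f : ∀ j : (V : Finset ℕ), X j =>
      (LLLrestr h f, LLLrestr (Finset.sdiff_subset : V \ t ⊆ V) f)) :=
    (LLLrestr_measurable h).prodMk (LLLrestr_measurable _)
  have := LLL_map_pair (X := X) μ h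
  rw [← Measure.prod_prod, ← this, Measure.map_apply hpair (hB₁.prod hB₂)]
  rfl

lemma LLL_marginal₁ {V t : Finset ℕ} (h : t ⊆ V)
    (B₁ : Set (∀ j : (t : Finset ℕ), X j)) (hB₁ : MeasurableSet B₁) :
    Measure.pi (fun j : (V : Finset ℕ) => μ j) (LLLrestr h ⁻¹' B₁)
      = Measure.pi (fun j : (t : Finset ℕ) => μ j) B₁ := by
  have := LLL_indep (X := X) μ h B₁ hB₁ Set.univ MeasurableSet.univ
  simpa using this

lemma LLL_marginal₂ {V t : Finset ℕ} (h : t ⊆ V)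
    (B₂ : Set (∀ j : ((V \ t : Finset ℕ) : Finset ℕ), X j)) (hB₂ : MeasurableSet B₂) :
    Measure.pi (fun j : (V : Finset ℕ) => μ j)
        (LLLrestr (Finset.sdiff_subset : V \ t ⊆ V) ⁻¹' B₂)
      = Measure.pi (fun j : ((V \ t : Finset ℕ) : Finset ℕ) => μ j) B₂ := by
  have := LLL_indep (X := X) μ h Set.univ MeasurableSet.univ B₂ hB₂
  simpa using this

end LLLaux

/-- Abstract finite Lovász Local Lemma over a probability space. -/
lemma LLL_finite_core {Ω : Type*} [MeasurableSpace Ω] (ν : Measure Ω)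
    [IsProbabilityMeasure ν] (s : Finset ℕ) (E : ℕ → Set Ω) (Γ : ℕ → Finset ℕ)
    (hmeas : ∀ i ∈ s, MeasurableSet (E i))
    (z : ℕ → ℝ) (hz : ∀ i, z i ∈ Set.Ioo (0 : ℝ) 1)
    (hP : ∀ i ∈ s, (ν (E i)).toReal ≤ z i * ∏ j ∈ (Γ i).erase i, (1 - z j))
    (hind : ∀ i ∈ s, ∀ T ⊆ s, (∀ j ∈ T, j ∉ Γ i) →
      (ν (E i ∩ ⋂ j ∈ T, (E j)ᶜ)).toReal
        = (ν (E i)).toReal * (ν (⋂ j ∈ T, (E j)ᶜ)).toReal) :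
    ∏ i ∈ s, (1 - z i) ≤ (ν (⋂ i ∈ s, (E i)ᶜ)).toReal := by
  classical
  set P : Set Ω → ℝ := fun U => (ν U).toReal with hPdef
  set C : Finset ℕ → Set Ω := fun T => ⋂ j ∈ T, (E j)ᶜ with hCdef
  have Pnonneg : ∀ U, 0 ≤ P U := fun U => ENNReal.toReal_nonneg
  have Pmono : ∀ {U U' : Set Ω}, U ⊆ U' → P U ≤ P U' := fun hUU' =>
    ENNReal.toReal_mono (measure_ne_top ν _) (measure_mono hUU')
  have Psplit : ∀ (U A : Set Ω), MeasurableSet A → P (U ∩ Aᶜ) = P U - P (U ∩ A) := by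
    intro U A hA
    have h1 : ν (U ∩ A) + ν (U \ A) = ν U := measure_inter_add_diff U hA
    have h2 : U ∩ Aᶜ = U \ A := (Set.diff_eq U A).symm
    have h3 := congrArg ENNReal.toReal h1
    rw [ENNReal.toReal_add (measure_ne_top ν _) (measure_ne_top ν _)] at h3
    simp only [hPdef, h2]
    linarith
  have hCempty : C ∅ = Set.univ := by simp [hCdef]
  have hPuniv : P Set.univ = 1 := by simp [hPdef]
  have hCanti : ∀ {T T' : Finset ℕ}, T ⊆ T' → C T' ⊆ C T := by
    intro T T' hTT'
    exact Set.biInter_subset_biInter_left hTT'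
  have hCinsert : ∀ (j) (T : Finset ℕ), C (insert j T) = C T ∩ (E j)ᶜ := by
    intro j T
    simp [hCdef, Set.biInter_insert, Set.inter_comm]
  have hz0 : ∀ i, (0:ℝ) ≤ 1 - z i := fun i => by linarith [(hz i).2]
  have hz1 : ∀ i, 1 - z i ≤ 1 := fun i => by linarith [(hz i).1]
  have hprod_nonneg : ∀ U : Finset ℕ, 0 ≤ ∏ j ∈ U, (1 - z j) := fun U =>
    Finset.prod_nonneg fun j _ => hz0 j
  have hprod_le_one : ∀ U : Finset ℕ, ∏ j ∈ U, (1 - z j) ≤ 1 := fun U =>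
    Finset.prod_le_one (fun j _ => hz0 j) (fun j _ => hz1 j)
  have hPEi : ∀ i ∈ s, ∀ T₁ ⊆ (Γ i).erase i, P (E i) ≤ z i * ∏ j ∈ T₁, (1 - z j) := by
    intro i hi T₁ hT₁
    refine le_trans (hP i hi) (mul_le_mul_of_nonneg_left ?_ (hz i).1.le)
    have hps := Finset.prod_sdiff (f := fun j => (1 - z j)) hT₁
    calc ∏ j ∈ (Γ i).erase i, (1 - z j)
        = (∏ j ∈ (Γ i).erase i \ T₁, (1 - z j)) * ∏ j ∈ T₁, (1 - z j) := hps.symm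
      _ ≤ 1 * ∏ j ∈ T₁, (1 - z j) :=
          mul_le_mul_of_nonneg_right (hprod_le_one _) (hprod_nonneg _)
      _ = ∏ j ∈ T₁, (1 - z j) := one_mul _
  have claim : ∀ n : ℕ, ∀ T ⊆ s, T.card ≤ n → ∀ i ∈ s, i ∉ T →
      P (E i ∩ C T) ≤ z i * P (C T) := by
    intro n
    induction n with
    | zero =>
      intro T hTs hcard i hi hiT
      have hT : T = ∅ := Finset.card_eq_zero.mp (Nat.le_zero.mp hcard)
      subst hT
      rw [hCempty]
      have h2 : P (E i) ≤ z i := by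
        have := hPEi i hi ∅ (Finset.empty_subset _)
        simpa using this
      rw [Set.inter_univ, hPuniv]
      linarith
    | succ n ih =>
      intro T hTs hcard i hi hiT
      set T₁ : Finset ℕ := T ∩ Γ i with hT₁def
      set T₂ : Finset ℕ := T \ Γ i with hT₂def
      have hT₁T : T₁ ⊆ T := Finset.inter_subset_left
      have hT₂T : T₂ ⊆ T := Finset.sdiff_subset
      have hTsplit : T₂ ∪ T₁ = T := Finset.sdiff_union_inter T (Γ i)
      have hT₂s : T₂ ⊆ s := hT₂T.trans hTs
      have hT₂Γ : ∀ j ∈ T₂, j ∉ Γ i := fun j hj => (Finset.mem_sdiff.mp hj).2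
      have peel : ∀ U ⊆ T₁, (∏ j ∈ U, (1 - z j)) * P (C T₂) ≤ P (C (T₂ ∪ U)) := by
        intro U
        induction U using Finset.induction_on with
        | empty => intro _; simp
        | @insert j U hjU ihU =>
          intro hsub
          have hjT₁ : j ∈ T₁ := hsub (Finset.mem_insert_self j U)
          have hUsub : U ⊆ T₁ := (Finset.insert_subset_iff.mp hsub).2
          have hjT : j ∈ T := hT₁T hjT₁
          have hjs : j ∈ s := hTs hjT
          have hjΓ : j ∈ Γ i := (Finset.mem_inter.mp hjT₁).2
          have hjT₂ : j ∉ T₂ := fun hj => (Finset.mem_sdiff.mp hj).2 hjΓ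
          have hjTU : j ∉ T₂ ∪ U := by
            simp only [Finset.mem_union, not_or]
            exact ⟨hjT₂, hjU⟩
          have hUTsub : T₂ ∪ U ⊆ s := Finset.union_subset hT₂s
            (hUsub.trans (hT₁T.trans hTs))
          have hcard2 : (T₂ ∪ U).card ≤ n := by
            have hsubt : T₂ ∪ U ⊆ T.erase j := by
              intro x hx
              rcases Finset.mem_union.mp hx with hx | hx
              · exact Finset.mem_erase.mpr ⟨fun h => hjT₂ (h ▸ hx), hT₂T hx⟩
              · exact Finset.mem_erase.mpr ⟨fun h => hjU (h ▸ hx), hT₁T (hUsub hx)⟩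
            have hcc := Finset.card_le_card hsubt
            rw [Finset.card_erase_of_mem hjT] at hcc
            have := Finset.card_le_card hTs
            omega
          have hkey := ih (T₂ ∪ U) hUTsub hcard2 j hjs hjTU
          have hihU := ihU hUsub
          have e1 : (1 - z j) * ((∏ k ∈ U, (1 - z k)) * P (C T₂)) ≤
              (1 - z j) * P (C (T₂ ∪ U)) :=
            mul_le_mul_of_nonneg_left hihU (hz0 j)
          have e2 : P (C (T₂ ∪ U) ∩ E j) ≤ z j * P (C (T₂ ∪ U)) := by
            rw [Set.inter_comm]; exact hkey
          have hCins : C (T₂ ∪ insert j U) = C (T₂ ∪ U) ∩ (E j)ᶜ := by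
            rw [Finset.union_insert, hCinsert]
          rw [Finset.prod_insert hjU, hCins, Psplit _ _ (hmeas j hjs), mul_assoc]
          linarith
      have hpeel := peel T₁ Finset.Subset.rfl
      rw [hTsplit] at hpeel
      have hindT₂ : P (E i ∩ C T₂) = P (E i) * P (C T₂) := hind i hi T₂ hT₂s hT₂Γ
      have step1 : P (E i ∩ C T) ≤ P (E i ∩ C T₂) :=
        Pmono (Set.inter_subset_inter_right _ (hCanti hT₂T))
      have hT₁sub : T₁ ⊆ (Γ i).erase i := by
        intro x hx
        exact Finset.mem_erase.mpr
          ⟨fun h => hiT (h ▸ (Finset.mem_inter.mp hx).1), (Finset.mem_inter.mp hx).2⟩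
      have step3 : P (E i) ≤ z i * ∏ j ∈ T₁, (1 - z j) := hPEi i hi T₁ hT₁sub
      calc P (E i ∩ C T) ≤ P (E i) * P (C T₂) := step1.trans_eq hindT₂
        _ ≤ (z i * ∏ j ∈ T₁, (1 - z j)) * P (C T₂) :=
            mul_le_mul_of_nonneg_right step3 (Pnonneg _)
        _ = z i * ((∏ j ∈ T₁, (1 - z j)) * P (C T₂)) := mul_assoc _ _ _
        _ ≤ z i * P (C T) := mul_le_mul_of_nonneg_left hpeel (hz i).1.le
  have lower : ∀ T, T ⊆ s → ∏ j ∈ T, (1 - z j) ≤ P (C T) := by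
    intro T
    induction T using Finset.induction_on with
    | empty => intro _; rw [hCempty, hPuniv]; simp
    | @insert j T hjT ihT =>
      intro hsub
      have hjs : j ∈ s := hsub (Finset.mem_insert_self _ _)
      have hTs : T ⊆ s := (Finset.insert_subset_iff.mp hsub).2
      have hihT := ihT hTs
      have hkey := claim T.card T hTs le_rfl j hjs hjT
      have e2 : P (C T ∩ E j) ≤ z j * P (C T) := by
        rw [Set.inter_comm]; exact hkey
      rw [Finset.prod_insert hjT, hCinsert, Psplit _ _ (hmeas j hjs)]
      nlinarith [hprod_nonneg T, Pnonneg (C T), hz0 j, hz1 j, hihT]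
  exact lower s Finset.Subset.rfl

/-- Finite version: any finite set of events can be avoided. -/
lemma LLL_finite_avoid (X : ℕ → Type*) [∀ j, Fintype (X j)] [∀ j, Nonempty (X j)]
    [∀ j, MeasurableSpace (X j)]
    (μ : ∀ j, Measure (X j)) [∀ j, IsProbabilityMeasure (μ j)]
    (vbl : ℕ → Finset ℕ)
    (S : ∀ i, Set (∀ j : (vbl i : Finset ℕ), X j))
    (hfin : ∀ i, {j | (vbl i ∩ vbl j).Nonempty}.Finite)
    (z : ℕ → ℝ) (hz : ∀ i, z i ∈ Set.Ioo (0 : ℝ) 1)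
    (hcond : ∀ i, ((Measure.pi (fun j : (vbl i : Finset ℕ) => μ j)) (S i)).toReal ≤
      z i * ∏ j ∈ (hfin i).toFinset.erase i, (1 - z j))
    (s : Finset ℕ) :
    ∃ f : ∀ j, X j, ∀ i ∈ s, (fun j : (vbl i : Finset ℕ) => f j) ∉ S i := by
  classical
  set V : Finset ℕ := s.biUnion vbl with hVdef
  have hsub : ∀ i ∈ s, vbl i ⊆ V := fun i hi => Finset.subset_biUnion_of_mem vbl hi
  set ν : Measure (∀ j : (V : Finset ℕ), X j) :=
    Measure.pi (fun j : (V : Finset ℕ) => μ j) with hνdef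
  set H : ∀ i, Set (∀ j : (vbl i : Finset ℕ), X j) := fun i =>
    toMeasurable (Measure.pi fun j : (vbl i : Finset ℕ) => μ j) (S i) with hHdef
  have hHmeas : ∀ i, MeasurableSet (H i) := fun i => measurableSet_toMeasurable _ _
  have hSH : ∀ i, S i ⊆ H i := fun i => subset_toMeasurable _ _
  have hHm : ∀ i, (Measure.pi fun j : (vbl i : Finset ℕ) => μ j) (H i)
      = (Measure.pi fun j : (vbl i : Finset ℕ) => μ j) (S i) := fun i =>
    measure_toMeasurable _
  set E : ℕ → Set (∀ j : (V : Finset ℕ), X j) := fun i =>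
    if h : i ∈ s then LLLrestr (hsub i h) ⁻¹' H i else ∅ with hEdef
  set Γ : ℕ → Finset ℕ := fun i => (hfin i).toFinset with hΓdef
  have hEmeas : ∀ i ∈ s, MeasurableSet (E i) := by
    intro i hi
    rw [hEdef]
    simp only [dif_pos hi]
    exact (hHmeas i).preimage (LLLrestr_measurable _)
  have hEi : ∀ i (hi : i ∈ s), E i = LLLrestr (hsub i hi) ⁻¹' H i := by
    intro i hi
    rw [hEdef]
    simp only [dif_pos hi]
  have hνE : ∀ i (hi : i ∈ s), ν (E i)
      = (Measure.pi fun j : (vbl i : Finset ℕ) => μ j) (S i) := by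
    intro i hi
    rw [hEi i hi, hνdef, LLL_marginal₁ μ (hsub i hi) (H i) (hHmeas i), hHm]
  have hP : ∀ i ∈ s, (ν (E i)).toReal ≤ z i * ∏ j ∈ (Γ i).erase i, (1 - z j) := by
    intro i hi
    rw [hνE i hi]
    exact hcond i
  -- independence
  have hind : ∀ i ∈ s, ∀ T ⊆ s, (∀ j ∈ T, j ∉ Γ i) →
      (ν (E i ∩ ⋂ j ∈ T, (E j)ᶜ)).toReal
        = (ν (E i)).toReal * (ν (⋂ j ∈ T, (E j)ᶜ)).toReal := by
    intro i hi T hTs hdisj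
    have hdisj' : ∀ j ∈ T, vbl j ⊆ V \ vbl i := by
      intro j hj k hk
      rw [Finset.mem_sdiff]
      refine ⟨hsub j (hTs hj) hk, fun hki => hdisj j hj ?_⟩
      rw [hΓdef]
      simp only [Set.Finite.mem_toFinset, Set.mem_setOf_eq]
      exact ⟨k, Finset.mem_inter.mpr ⟨hki, hk⟩⟩
    set B₂ : Set (∀ j : ((V \ vbl i : Finset ℕ) : Finset ℕ), X j) :=
      ⋂ j, ⋂ (hj : j ∈ T), LLLrestr (hdisj' j hj) ⁻¹' (H j)ᶜ with hB₂def
    have hB₂meas : MeasurableSet B₂ := by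
      rw [hB₂def]
      refine MeasurableSet.iInter fun j => MeasurableSet.iInter fun hj => ?_
      exact ((hHmeas j).compl).preimage (LLLrestr_measurable _)
    have hCT : (⋂ j ∈ T, (E j)ᶜ)
        = LLLrestr (Finset.sdiff_subset : V \ vbl i ⊆ V) ⁻¹' B₂ := by
      ext x
      simp only [Set.mem_iInter, Set.mem_compl_iff, Set.mem_preimage, hB₂def]
      constructor
      · intro hx j hj
        have := hx j hj
        rw [hEi j (hTs hj)] at this
        exact this
      · intro hx j hj
        rw [hEi j (hTs hj)]
        exact hx j hj
    have hEiH := hEi i hi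
    rw [hCT, hEiH, hνdef,
      LLL_indep μ (hsub i hi) (H i) (hHmeas i) B₂ hB₂meas,
      LLL_marginal₁ μ (hsub i hi) (H i) (hHmeas i),
      LLL_marginal₂ μ (hsub i hi) B₂ hB₂meas, ENNReal.toReal_mul]
  have hcore := LLL_finite_core ν s E Γ hEmeas z hz hP hind
  have hprodpos : 0 < ∏ i ∈ s, (1 - z i) :=
    Finset.prod_pos fun i _ => by linarith [(hz i).2]
  have hne : ν (⋂ i ∈ s, (E i)ᶜ) ≠ 0 := by
    intro h0
    rw [h0] at hcore
    simp at hcore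
    linarith
  obtain ⟨ω, hω⟩ := MeasureTheory.nonempty_of_measure_ne_zero hne
  refine ⟨fun j => if h : j ∈ V then ω ⟨j, h⟩ else Classical.arbitrary _, ?_⟩
  intro i hi hmem
  have hωi : ω ∉ E i := by
    have := Set.mem_iInter₂.mp hω i hi
    exact this
  apply hωi
  rw [hEi i hi]
  have hres : (fun j : (vbl i : Finset ℕ) =>
      (fun j : ℕ => if h : j ∈ V then ω ⟨j, h⟩ else Classical.arbitrary _) j.1)
      = LLLrestr (hsub i hi) ω := by
    funext j
    have hjV : (j : ℕ) ∈ V := hsub i hi j.2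
    simp only [dif_pos hjV]
    rfl
  rw [Set.mem_preimage]
  rw [← hres]
  exact hSH i hmem

/-- Lovász Local Lemma, infinite version.  Variables `x j` range over finite
nonempty types `X j` with probability distributions `μ j`; event `A i` is
determined by the finite set `vbl i` of variables, via the set `S i` of
forbidden restricted assignments, so `Pr[A i]` is the measure of `S i` under
the (finite) product measure over `vbl i`.  Each event has finitely many
neighbors (events sharing a variable).  Under the LLL condition there is an
assignment of values to all the variables avoiding every event. -/
theorem infinite_lovasz_local_lemma
    (X : ℕ → Type*) [∀ j, Fintype (X j)] [∀ j, Nonempty (X j)]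
    [∀ j, MeasurableSpace (X j)]
    (μ : ∀ j, Measure (X j)) [∀ j, IsProbabilityMeasure (μ j)]
    (vbl : ℕ → Finset ℕ)
    (S : ∀ i, Set (∀ j : (vbl i : Finset ℕ), X j))
    (hfin : ∀ i, {j | (vbl i ∩ vbl j).Nonempty}.Finite)
    (z : ℕ → ℝ) (hz : ∀ i, z i ∈ Set.Ioo (0 : ℝ) 1)
    (hcond : ∀ i, ((Measure.pi (fun j : (vbl i : Finset ℕ) => μ j)) (S i)).toReal ≤
      z i * ∏ j ∈ (hfin i).toFinset.erase i, (1 - z j)) :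
    ∃ f : ∀ j, X j, ∀ i, (fun j : (vbl i : Finset ℕ) => f j) ∉ S i := by
  classical
  letI : ∀ j, TopologicalSpace (X j) := fun _ => ⊥
  haveI : ∀ j, DiscreteTopology (X j) := fun _ => ⟨rfl⟩
  set F : ℕ → Set (∀ j, X j) :=
    fun i => {f | (fun j : (vbl i : Finset ℕ) => f j) ∉ S i} with hF
  have hclosed : ∀ i, IsClosed (F i) := by
    intro i
    have hc : Continuous (fun f : ∀ j, X j => fun j : (vbl i : Finset ℕ) => f j) :=
      continuous_pi fun _ => continuous_apply _
    have hFi : F i = (fun f : ∀ j, X j => fun j : (vbl i : Finset ℕ) => f j) ⁻¹' (S i)ᶜ :=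
      rfl
    rw [hFi]
    exact IsClosed.preimage hc (isClosed_discrete _)
  have hFIP : ∀ u : Finset ℕ, (Set.univ ∩ ⋂ i ∈ u, F i).Nonempty := by
    intro u
    obtain ⟨f, hf⟩ := LLL_finite_avoid X μ vbl S hfin z hz hcond u
    exact ⟨f, Set.mem_inter (Set.mem_univ f) (Set.mem_iInter₂.mpr hf)⟩
  obtain ⟨f, -, hf⟩ :=
    (isCompact_univ (X := ∀ j, X j)).inter_iInter_nonempty F hclosed hFIP
  exact ⟨f, fun i => Set.mem_iInter.mp hf i⟩
end

section
/- In the Moser–Tardos tree construction, any two vertices of a witness tree at the same distance from the root have labels that are non-neighboring (variable-disjoint) events. -/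
/-- A vertex of a witness tree: (label, depth, index of parent).
The root is `(root, 0, 0)`. -/
abbrev WRow : Type := ℕ × ℕ × ℕ

/-- One step of the Moser–Tardos witness tree construction for neighbor
relation `Nb`: attach a new vertex labeled `s` as a son of a deepest current
vertex whose label is a neighbor of `s` (skip `s` if there is none). -/
def wstep (Nb : ℕ → ℕ → Bool) (vs : List WRow) (s : ℕ) : List WRow :=
  match ((vs.zipIdx.map Prod.swap).filter (fun q => Nb q.2.1 s)).argmax (fun q => q.2.2.1) with
  | none => vs
  | some q => vs ++ [(s, q.2.2.1 + 1, q.1)]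

/-- The witness tree built from root label `root` by processing the earlier
resampled events (in reverse temporal order) listed in `log`. -/
def wbuild (Nb : ℕ → ℕ → Bool) (root : ℕ) (log : List ℕ) : List WRow :=
  log.foldl (wstep Nb) [(root, 0, 0)]

lemma wstep_inv (Nb : ℕ → ℕ → Bool) (vs : List WRow) (s : ℕ)
    (h : ∀ d, (((vs.filter (fun r => r.2.1 == d)).map (fun r => r.1)).Pairwise
      (fun a b => Nb a b = false))) :
    ∀ d, ((((wstep Nb vs s).filter (fun r => r.2.1 == d)).map (fun r => r.1)).Pairwise
      (fun a b => Nb a b = false)) := by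
  intro d
  unfold wstep
  cases hm : ((vs.zipIdx.map Prod.swap).filter (fun q => Nb q.2.1 s)).argmax (fun q => q.2.2.1) with
  | none => exact h d
  | some q =>
      rw [List.filter_append, List.map_append, List.pairwise_append]
      refine ⟨h d, ?_, ?_⟩
      · by_cases hd : q.2.2.1 + 1 = d <;> simp [hd]
      · intro a ha b hb
        simp only [List.mem_map, List.mem_filter] at ha hb
        obtain ⟨r, ⟨hrv, hrd⟩, hra⟩ := ha
        obtain ⟨r', hr', hrb⟩ := hb
        simp only [List.mem_filter, List.mem_singleton] at hr'
        obtain ⟨hr'eq, hr'd⟩ := hr'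
        subst hr'eq
        subst hrb
        subst hra
        -- b = s, new depth q.2.2.1 + 1 = d
        by_contra hne
        have hnb : Nb r.1 s = true := by
          cases hNb : Nb r.1 s with
          | false => exact absurd hNb hne
          | true => rfl
        -- r ∈ vs, so (i, r) ∈ vs.enum for some i
        obtain ⟨i, hi, hget⟩ := List.mem_iff_getElem.1 hrv
        have hmem : (i, r) ∈ vs.zipIdx.map Prod.swap := by
          rw [List.mem_map]
          refine ⟨(r, i), ?_, rfl⟩
          rw [List.mk_mem_zipIdx_iff_getElem?]
          simp [List.getElem?_eq_getElem hi, hget]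
        have hmemf : (i, r) ∈ (vs.zipIdx.map Prod.swap).filter (fun q => Nb q.2.1 s) := by
          rw [List.mem_filter]
          exact ⟨hmem, hnb⟩
        have hle := List.le_of_mem_argmax hmemf hm
        simp only at hle hrd hr'd
        have hd : r.2.1 = d := by simpa using hrd
        have hd' : q.2.2.1 + 1 = d := by simpa using hr'd
        omega

/-- In a witness tree produced by the Moser–Tardos construction, the labels of
any two vertices at the same distance `d` from the root are non-neighboring
events. -/
theorem witness_tree_levels_disjoint (Nb : ℕ → ℕ → Bool)
    (hrefl : ∀ a, Nb a a = true) (hsymm : ∀ a b, Nb a b = Nb b a)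
    (root : ℕ) (log : List ℕ) (d : ℕ) :
    ((((wbuild Nb root log).filter (fun r => r.2.1 == d)).map
        (fun r => r.1)).Pairwise (fun a b => Nb a b = false)) := by
  suffices h : ∀ d, ((((wbuild Nb root log).filter (fun r => r.2.1 == d)).map
      (fun r => r.1)).Pairwise (fun a b => Nb a b = false)) from h d
  unfold wbuild
  induction log using List.reverseRecOn with
  | nil =>
      intro d
      by_cases hd : (0 : ℕ) = d <;> simp [hd]
  | append_singleton l s ih =>
      rw [List.foldl_append, List.foldl_cons, List.foldl_nil]
      exact wstep_inv Nb _ s ih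
end

section
/- Witness trees appearing at different steps of a run of the Moser–Tardos algorithm are different: if two witness trees in the same run have the same root label A_i, they contain different numbers of vertices labeled A_i. -/
lemma count_wstep (Nb : ℕ → ℕ → Bool) (r : ℕ) (hrefl : Nb r r = true)
    (vs : List WRow) (hmem : r ∈ vs.map Prod.fst) (s : ℕ) :
    ((wstep Nb vs s).map Prod.fst).count r
      = (vs.map Prod.fst).count r + (if s = r then 1 else 0) ∧
      r ∈ (wstep Nb vs s).map Prod.fst := by
  unfold wstep
  cases h : ((vs.zipIdx.map Prod.swap).filter (fun q => Nb q.2.1 s)).argmax (fun q => q.2.2.1) with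
  | none =>
    simp only
    rcases List.mem_map.1 hmem with ⟨a, ha, hfa⟩
    by_cases hs : s = r
    · exfalso
      subst hs
      rw [List.argmax_eq_none] at h
      have : (vs.zipIdx[0]?).isSome := by
        cases vs with
        | nil => simp at ha
        | cons x t => simp
      obtain ⟨i, hi⟩ : ∃ i, (i, a) ∈ vs.zipIdx.map Prod.swap := by
        obtain ⟨i, hi', hia⟩ := List.mem_iff_getElem.1 ha
        exact ⟨i, List.mem_map.2 ⟨(a, i), List.mem_zipIdx_iff_getElem?.2 (by simp [List.getElem?_eq_getElem hi', hia]), rfl⟩⟩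
      have : (i, a) ∈ (vs.zipIdx.map Prod.swap).filter (fun q => Nb q.2.1 s) := by
        refine List.mem_filter.2 ⟨hi, ?_⟩
        simp [hfa, hrefl]
      rw [h] at this; simp at this
    · simp [hs, hmem]
  | some q =>
    simp only [List.map_append, List.count_append]
    constructor
    · by_cases hs : s = r <;> simp [hs, List.count_singleton']
    · simp [hmem]

lemma count_foldl (Nb : ℕ → ℕ → Bool) (r : ℕ) (hrefl : Nb r r = true) :
    ∀ (log : List ℕ) (vs : List WRow), r ∈ vs.map Prod.fst →
    (((log.foldl (wstep Nb) vs).map Prod.fst).count r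
      = (vs.map Prod.fst).count r + log.count r) := by
  intro log
  induction log with
  | nil => simp
  | cons s t ih =>
    intro vs hmem
    obtain ⟨hc, hm⟩ := count_wstep Nb r hrefl vs hmem s
    simp only [List.foldl_cons, List.count_cons]
    rw [ih _ hm, hc]
    by_cases hs : s = r <;> simp [hs] <;> omega

lemma count_wbuild (Nb : ℕ → ℕ → Bool) (r : ℕ) (hrefl : Nb r r = true) (log : List ℕ) :
    ((wbuild Nb r log).map Prod.fst).count r = 1 + log.count r := by
  have := count_foldl Nb r hrefl log [(r, 0, 0)] (by simp)
  unfold wbuild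
  rw [this]; simp [Nat.add_comm]

/-- Witness trees appearing at different steps of the same run are different:
if `L` is the temporal list of resampled events of a run and steps `k₁ < k₂`
resample the same event, then the witness trees of these steps contain
different numbers of vertices carrying the common root label (hence the trees
themselves differ). -/
theorem witness_trees_of_distinct_steps_differ (Nb : ℕ → ℕ → Bool)
    (hrefl : ∀ a, Nb a a = true) (hsymm : ∀ a b, Nb a b = Nb b a)
    (L : List ℕ) (k₁ k₂ : ℕ) (h12 : k₁ < k₂) (h2 : k₂ < L.length)
    (heq : L.getD k₁ 0 = L.getD k₂ 0) :
    (((wbuild Nb (L.getD k₁ 0) ((L.take k₁).reverse)).map (fun r => r.1)).count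
        (L.getD k₁ 0)) ≠
      (((wbuild Nb (L.getD k₂ 0) ((L.take k₂).reverse)).map (fun r => r.1)).count
        (L.getD k₂ 0)) := by
  set r := L.getD k₁ 0 with hr
  have h1 : k₁ < L.length := h12.trans h2
  have e1 := count_wbuild Nb r (hrefl r) (L.take k₁).reverse
  have e2 := count_wbuild Nb r (hrefl r) (L.take k₂).reverse
  show ((wbuild Nb r ((L.take k₁).reverse)).map Prod.fst).count r ≠ _
  rw [← heq]
  show _ ≠ ((wbuild Nb r ((L.take k₂).reverse)).map Prod.fst).count r
  rw [e1, e2, List.count_reverse, List.count_reverse]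
  have hsub : List.Sublist (L.take (k₁+1)) (L.take k₂) := by
    have : L.take (k₁+1) = (L.take k₂).take (k₁+1) := by
      rw [List.take_take, min_eq_left h12]
    rw [this]; exact List.take_sublist _ _
  have hstep : (L.take (k₁+1)).count r = (L.take k₁).count r + 1 := by
    rw [List.take_succ]
    have : L[k₁]? = some r := by
      rw [List.getElem?_eq_getElem h1]
      simp [hr, List.getD_eq_getElem?_getD, List.getElem?_eq_getElem h1]
    simp [List.take_succ, this]
  have := hsub.count_le r
  omega
end

section
/- For every witness tree T, the probability that T appears at some step of a run of the Moser–Tardos algorithm is at most the product over all vertices v of T of Pr[A_{label(v)}]. -/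
/-- Events `i` and `j` are neighbors when they share a variable. -/
def nbOf (vbl : ℕ → Finset ℕ) (i j : ℕ) : Bool :=
  decide ((vbl i ∩ vbl j).Nonempty)

/-- The event chosen for resampling: the true event of least index. -/
def mtPick (Nev : ℕ) (A : ℕ → (ℕ → ℕ) → Bool) (f : ℕ → ℕ) : Option ℕ :=
  (List.range Nev).find? (fun i => A i f)

/-- Table usage counters of the Moser–Tardos algorithm after `t` steps, run on
the table `ω` of pre-generated random values (`ω (v, j)` is the `j`-th fresh
value for variable `v`; variable `v` currently carries the value
`ω (v, c v)`).  Initially all counters are `0`; a resampling of event `i`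
advances the counters of the variables in `vbl i`. -/
def mtCnt (Nev : ℕ) (vbl : ℕ → Finset ℕ) (A : ℕ → (ℕ → ℕ) → Bool)
    (ω : ℕ × ℕ → ℕ) : ℕ → ℕ → ℕ
  | 0 => fun _ => 0
  | t + 1 =>
    let c := mtCnt Nev vbl A ω t
    match mtPick Nev A (fun v => ω (v, c v)) with
    | none => c
    | some i => fun v => if v ∈ vbl i then c v + 1 else c v

/-- The event resampled at step `t` (or `none` if the algorithm has halted). -/
def mtLog (Nev : ℕ) (vbl : ℕ → Finset ℕ) (A : ℕ → (ℕ → ℕ) → Bool)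
    (ω : ℕ × ℕ → ℕ) (t : ℕ) : Option ℕ :=
  mtPick Nev A (fun v => ω (v, mtCnt Nev vbl A ω t v))

/-- The temporal list of events resampled during the first `t` steps. -/
def mtList (Nev : ℕ) (vbl : ℕ → Finset ℕ) (A : ℕ → (ℕ → ℕ) → Bool)
    (ω : ℕ × ℕ → ℕ) (t : ℕ) : List ℕ :=
  (List.range t).filterMap (mtLog Nev vbl A ω)

/-- The witness tree of the resampling at step `t` (with resampled event `i`). -/
def mtTree (Nev : ℕ) (vbl : ℕ → Finset ℕ) (A : ℕ → (ℕ → ℕ) → Bool)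
    (ω : ℕ × ℕ → ℕ) (i t : ℕ) : List WRow :=
  wbuild (nbOf vbl) i ((mtList Nev vbl A ω t).reverse)

open MeasureTheory ProbabilityTheory

/-- count of rows whose label's variable set contains `x` -/
def cntvF (vbl : ℕ → Finset ℕ) (l : List WRow) (x : ℕ) : ℕ :=
  l.countP (fun r => x ∈ vbl r.1)

namespace MTaux

variable (Nev : ℕ) (vbl : ℕ → Finset ℕ) (A : ℕ → (ℕ → ℕ) → Bool)

/-- one step of the tree construction, indexed by time. -/
def stp (ω : ℕ × ℕ → ℕ) (vs : List WRow) (s : ℕ) : List WRow :=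
  match mtLog Nev vbl A ω s with
  | none => vs
  | some j => wstep (nbOf vbl) vs j

/-- process steps `s-1, s-2, ..., 0`. -/
def G (ω : ℕ × ℕ → ℕ) : ℕ → List WRow → List WRow
  | 0, vs => vs
  | s + 1, vs => G ω s (stp Nev vbl A ω vs s)

lemma foldl_eq_G (ω : ℕ × ℕ → ℕ) : ∀ (t : ℕ) (vs : List WRow),
    ((mtList Nev vbl A ω t).reverse).foldl (wstep (nbOf vbl)) vs = G Nev vbl A ω t vs := by
  intro t
  induction t with
  | zero => intro vs; simp [mtList, G]
  | succ t ih =>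
    intro vs
    have h1 : mtList Nev vbl A ω (t+1) = mtList Nev vbl A ω t ++ (mtLog Nev vbl A ω t).toList := by
      simp only [mtList, List.range_succ, List.filterMap_append]
      cases h : mtLog Nev vbl A ω t <;> simp [h]
    rw [h1, List.reverse_append, List.foldl_append]
    have h2 : ((mtLog Nev vbl A ω t).toList.reverse).foldl (wstep (nbOf vbl)) vs
        = stp Nev vbl A ω vs t := by
      cases h : mtLog Nev vbl A ω t <;> simp [stp, h]
    rw [h2, ih]
    rfl


/-- count of rows whose label's variable set contains x -/

def Inv (ω : ℕ × ℕ → ℕ) (s : ℕ) (vs : List WRow) : Prop :=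
  ∀ k, (hk : k < vs.length) → ∃ σ, s ≤ σ ∧ mtLog Nev vbl A ω σ = some (vs[k].1) ∧
    ∀ x ∈ vbl (vs[k].1),
      mtCnt Nev vbl A ω σ x = cntvF vbl (vs.drop (k+1)) x + mtCnt Nev vbl A ω s x

lemma inv_step (ω : ℕ × ℕ → ℕ) (s : ℕ) (vs : List WRow)
    (h : Inv Nev vbl A ω (s+1) vs) : Inv Nev vbl A ω s (stp Nev vbl A ω vs s) := by
  cases hl : mtLog Nev vbl A ω s with
  | none =>
    -- counters unchanged
    have hc : mtCnt Nev vbl A ω (s+1) = mtCnt Nev vbl A ω s := by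
      have : mtPick Nev A (fun v => ω (v, mtCnt Nev vbl A ω s v)) = none := hl
      simp [mtCnt, this]
    rw [stp, hl]
    intro k hk
    obtain ⟨σ, hσ, hlog, hcnt⟩ := h k hk
    exact ⟨σ, Nat.le_of_succ_le hσ, hlog, by rw [← hc]; exact hcnt⟩
  | some j =>
    have hc : ∀ x, mtCnt Nev vbl A ω (s+1) x
        = mtCnt Nev vbl A ω s x + (if x ∈ vbl j then 1 else 0) := by
      intro x
      have hp : mtPick Nev A (fun v => ω (v, mtCnt Nev vbl A ω s v)) = some j := hl
      simp only [mtCnt, hp]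
      by_cases hx : x ∈ vbl j <;> simp [hx]
    have hstp : stp Nev vbl A ω vs s = wstep (nbOf vbl) vs j := by rw [stp, hl]
    rw [hstp]
    cases ha : ((vs.zipIdx.map Prod.swap).filter (fun q => nbOf vbl q.2.1 j)).argmax (fun q => q.2.2.1) with
    | none =>
      have hw : wstep (nbOf vbl) vs j = vs := by simp only [wstep, ha]
      rw [hw]
      have hempty : ((vs.zipIdx.map Prod.swap).filter (fun q => nbOf vbl q.2.1 j)) = [] :=
        List.argmax_eq_none.1 ha
      intro k hk
      obtain ⟨σ, hσ, hlog, hcnt⟩ := h k hk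
      refine ⟨σ, Nat.le_of_succ_le hσ, hlog, ?_⟩
      intro x hx
      have hxj : x ∉ vbl j := by
        intro hxj
        have hnb : nbOf vbl (vs[k].1) j = true := by
          simp only [nbOf, decide_eq_true_eq]
          exact ⟨x, Finset.mem_inter.2 ⟨hx, hxj⟩⟩
        have hmem : (k, vs[k]) ∈ vs.zipIdx.map Prod.swap :=
          List.mem_map.2 ⟨(vs[k], k), List.mem_zipIdx_iff_getElem?.2 (by simp [hk]), rfl⟩
        have : (k, vs[k]) ∈ ((vs.zipIdx.map Prod.swap).filter (fun q => nbOf vbl q.2.1 j)) :=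
          List.mem_filter.2 ⟨hmem, hnb⟩
        rw [hempty] at this
        exact List.not_mem_nil this
      have := hcnt x hx
      rwa [hc x, if_neg hxj, Nat.add_zero] at this
    | some q =>
      have hw : wstep (nbOf vbl) vs j = vs ++ [(j, q.2.2.1 + 1, q.1)] := by
        simp only [wstep, ha]
      rw [hw]
      intro k hk
      have hlen : (vs ++ [(j, q.2.2.1 + 1, q.1)]).length = vs.length + 1 := by simp
      rw [hlen] at hk
      rcases Nat.lt_succ_iff_lt_or_eq.1 hk with hk' | hk'
      · -- old vertex
        obtain ⟨σ, hσ, hlog, hcnt⟩ := h k hk'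
        have hget : (vs ++ [(j, q.2.2.1 + 1, q.1)])[k]'(by simp; omega) = vs[k] :=
          List.getElem_append_left hk'
        refine ⟨σ, Nat.le_of_succ_le hσ, by rw [hget]; exact hlog, ?_⟩
        intro x hx
        rw [hget] at *
        have hdrop : (vs ++ [(j, q.2.2.1 + 1, q.1)]).drop (k+1)
            = vs.drop (k+1) ++ [(j, q.2.2.1 + 1, q.1)] :=
          List.drop_append_of_le_length hk'
        rw [hdrop]
        have hcp : cntvF vbl (vs.drop (k+1) ++ [(j, q.2.2.1 + 1, q.1)]) x
            = cntvF vbl (vs.drop (k+1)) x + (if x ∈ vbl j then 1 else 0) := by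
          simp [cntvF, List.countP_append, List.countP_cons]
        rw [hcp]
        have := hcnt x hx
        rw [hc x] at this
        omega
      · -- new vertex
        subst hk'
        have hget : (vs ++ [(j, q.2.2.1 + 1, q.1)])[vs.length]'(by simp) = (j, q.2.2.1 + 1, q.1) := by
          simp
        refine ⟨s, le_refl s, by rw [hget]; exact hl, ?_⟩
        intro x hx
        have hdrop : (vs ++ [(j, q.2.2.1 + 1, q.1)]).drop (vs.length + 1) = [] := by
          apply List.drop_eq_nil_of_le; simp
        rw [hdrop]
        simp [cntvF]

lemma inv_G (ω : ℕ × ℕ → ℕ) : ∀ (s : ℕ) (vs : List WRow),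
    Inv Nev vbl A ω s vs → Inv Nev vbl A ω 0 (G Nev vbl A ω s vs) := by
  intro s
  induction s with
  | zero => intro vs h; exact h
  | succ s ih =>
    intro vs h
    exact ih _ (inv_step Nev vbl A ω s vs h)

/-- Main combinatorial lemma. -/
lemma key (ω : ℕ × ℕ → ℕ) (i t : ℕ) (hl : mtLog Nev vbl A ω t = some i) :
    ∀ k, (hk : k < (mtTree Nev vbl A ω i t).length) →
      ∃ σ, mtLog Nev vbl A ω σ = some ((mtTree Nev vbl A ω i t)[k].1) ∧
        ∀ x ∈ vbl ((mtTree Nev vbl A ω i t)[k].1),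
          mtCnt Nev vbl A ω σ x = cntvF vbl ((mtTree Nev vbl A ω i t).drop (k+1)) x := by
  have htree : mtTree Nev vbl A ω i t = G Nev vbl A ω t ([(i, 0, 0)] : List WRow) := by
    rw [mtTree, wbuild]; exact foldl_eq_G Nev vbl A ω t _
  have hinv0 : Inv Nev vbl A ω t ([(i, 0, 0)] : List WRow) := by
    intro k hk
    have hk0 : k = 0 := Nat.lt_one_iff.1 (by simpa using hk)
    subst hk0
    exact ⟨t, le_refl t, hl, fun x _ => by simp [cntvF]⟩
  have hinv := inv_G Nev vbl A ω t _ hinv0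
  rw [← htree] at hinv
  intro k hk
  obtain ⟨σ, _, hlog, hcnt⟩ := hinv k hk
  exact ⟨σ, hlog, fun x hx => by simpa [mtCnt] using hcnt x hx⟩

end MTaux

namespace MTmeas

variable (μ : Measure (ℕ × ℕ → ℕ)) [IsProbabilityMeasure μ]
variable (vbl : ℕ → Finset ℕ) (A : ℕ → (ℕ → ℕ) → Bool)

lemma cyl_meas
    (hiid : iIndepFun (m := fun _ : ℕ × ℕ => (⊤ : MeasurableSpace ℕ)) (fun q ω => ω q) μ)
    (S : Finset ℕ) (m g : ℕ → ℕ) :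
    μ (⋂ v ∈ S, {ω : ℕ × ℕ → ℕ | ω (v, m v) = g v})
      = ∏ v ∈ S, μ {ω : ℕ × ℕ → ℕ | ω (v, m v) = g v} := by
  have inj : ∀ x ∈ S, ∀ y ∈ S, (fun v => (v, m v)) x = (fun v => (v, m v)) y → x = y :=
    fun a _ b _ h => congrArg Prod.fst h
  have h := hiid.measure_inter_preimage_eq_mul (S.image (fun v => (v, m v)))
    (sets := fun q => {g q.1}) (fun i _ => MeasurableSpace.measurableSet_top)
  rw [Finset.prod_image inj] at h
  have h2 : (⋂ q ∈ S.image (fun v => (v, m v)), (fun ω : ℕ × ℕ → ℕ => ω q) ⁻¹' {g q.1})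
      = ⋂ v ∈ S, {ω : ℕ × ℕ → ℕ | ω (v, m v) = g v} := by
    ext ω
    simp only [Set.mem_iInter, Set.mem_preimage, Set.mem_singleton_iff, Finset.mem_image,
      Set.mem_setOf_eq]
    constructor
    · intro hh v hv; exact hh (v, m v) ⟨v, hv, rfl⟩
    · rintro hh q ⟨v, hv, rfl⟩; exact hh v hv
  rw [h2] at h
  rw [h]
  rfl

variable (i : ℕ)

/-- extension of a partial assignment on `vbl i` by `0`. -/
def extF (a : ↥(vbl i) → ℕ) : ℕ → ℕ := fun v => if h : v ∈ vbl i then a ⟨v, h⟩ else 0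

def Cyl (m : ℕ → ℕ) (a : ↥(vbl i) → ℕ) : Set (ℕ × ℕ → ℕ) :=
  ⋂ v : ↥(vbl i), {ω | ω (v.1, m v.1) = a v}

lemma cyl_meas' (hiid : iIndepFun (m := fun _ : ℕ × ℕ => (⊤ : MeasurableSpace ℕ)) (fun q ω => ω q) μ)
    (m : ℕ → ℕ) (a : ↥(vbl i) → ℕ) :
    μ (Cyl vbl i m a) = ∏ v ∈ vbl i, μ {ω : ℕ × ℕ → ℕ | ω (v, m v) = extF vbl i a v} := by
  have h : Cyl vbl i m a = ⋂ v ∈ vbl i, {ω : ℕ × ℕ → ℕ | ω (v, m v) = extF vbl i a v} := by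
    ext ω
    simp only [Cyl, Set.mem_iInter, Set.mem_setOf_eq]
    constructor
    · intro hh v hv; rw [extF, dif_pos hv]; exact hh ⟨v, hv⟩
    · intro hh v; have := hh v.1 v.2; rwa [extF, dif_pos v.2] at this
  rw [h, cyl_meas μ hiid]

lemma measurable_cyl (m : ℕ → ℕ) (a : ↥(vbl i) → ℕ) : MeasurableSet (Cyl vbl i m a) := by
  apply MeasurableSet.iInter
  intro v
  have h : {ω : ℕ × ℕ → ℕ | ω (v.1, m v.1) = a v}
      = (fun ω : ℕ × ℕ → ℕ => ω (v.1, m v.1)) ⁻¹' {a v} := rfl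
  rw [h]
  exact (measurable_pi_apply _) (measurableSet_singleton _)

lemma ev_decomp (hdep : ∀ i f g, (∀ v ∈ vbl i, f v = g v) → A i f = A i g) (m : ℕ → ℕ) :
    {ω : ℕ × ℕ → ℕ | A i (fun v => ω (v, m v)) = true}
      = ⋃ a : {a : ↥(vbl i) → ℕ // A i (extF vbl i a) = true}, Cyl vbl i m a.1 := by
  ext ω
  simp only [Set.mem_setOf_eq, Set.mem_iUnion]
  constructor
  · intro hA
    refine ⟨⟨fun v => ω (v.1, m v.1), ?_⟩, ?_⟩
    · rw [← hA]
      apply hdep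
      intro v hv
      rw [extF, dif_pos hv]
    · exact Set.mem_iInter.2 (fun v => rfl)
  · rintro ⟨⟨a, ha⟩, hc⟩
    have hval : ∀ v ∈ vbl i, (fun v => ω (v, m v)) v = extF vbl i a v := by
      intro v hv
      rw [extF, dif_pos hv]
      exact Set.mem_iInter.1 hc ⟨v, hv⟩
    rw [hdep i _ _ hval, ha]

lemma measEv_aux
    (hiid : iIndepFun (m := fun _ : ℕ × ℕ => (⊤ : MeasurableSpace ℕ)) (fun q ω => ω q) μ)
    (hident : ∀ v j val, μ {ω : ℕ × ℕ → ℕ | ω (v, j) = val} = μ {ω | ω (v, 0) = val})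
    (hdep : ∀ i f g, (∀ v ∈ vbl i, f v = g v) → A i f = A i g) (m : ℕ → ℕ) :
    μ {ω : ℕ × ℕ → ℕ | A i (fun v => ω (v, m v)) = true}
      = ∑' a : {a : ↥(vbl i) → ℕ // A i (extF vbl i a) = true},
          ∏ v ∈ vbl i, μ {ω : ℕ × ℕ → ℕ | ω (v, 0) = extF vbl i a.1 v} := by
  rw [ev_decomp vbl A i hdep m]
  have hdisj : Pairwise (Function.onFun Disjoint
      (fun a : {a : ↥(vbl i) → ℕ // A i (extF vbl i a) = true} => Cyl vbl i m a.1)) := by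
    intro a b hab
    have hne : a.1 ≠ b.1 := fun h => hab (Subtype.ext h)
    obtain ⟨v, hv⟩ := Function.ne_iff.1 hne
    rw [Function.onFun]
    apply Set.disjoint_left.2
    intro ω hωa hωb
    exact hv ((Set.mem_iInter.1 hωa v).symm.trans (Set.mem_iInter.1 hωb v))
  rw [measure_iUnion hdisj (fun a => measurable_cyl vbl i m a.1)]
  congr 1
  funext a
  rw [cyl_meas' μ vbl i hiid m a.1]
  exact Finset.prod_congr rfl (fun v _ => hident v (m v) _)

lemma measEv
    (hiid : iIndepFun (m := fun _ : ℕ × ℕ => (⊤ : MeasurableSpace ℕ)) (fun q ω => ω q) μ)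
    (hident : ∀ v j val, μ {ω : ℕ × ℕ → ℕ | ω (v, j) = val} = μ {ω | ω (v, 0) = val})
    (hdep : ∀ i f g, (∀ v ∈ vbl i, f v = g v) → A i f = A i g) (m : ℕ → ℕ) :
    μ {ω : ℕ × ℕ → ℕ | A i (fun v => ω (v, m v)) = true}
      = μ {ω : ℕ × ℕ → ℕ | A i (fun v => ω (v, 0)) = true} :=
  (measEv_aux μ vbl A i hiid hident hdep m).trans
    (measEv_aux μ vbl A i hiid hident hdep (fun _ => 0)).symm

end MTmeas

namespace MTmeas2

variable (μ : Measure (ℕ × ℕ → ℕ)) [IsProbabilityMeasure μ]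
variable (vbl : ℕ → Finset ℕ) (A : ℕ → (ℕ → ℕ) → Bool)


def EvSet (T : List WRow) : Set (ℕ × ℕ → ℕ) :=
  {ω | ∀ k, k < T.length →
    A ((T.getD k (0,0,0)).1) (fun v => ω (v, cntvF vbl (T.drop (k+1)) v)) = true}

lemma evBound
    (hiid : iIndepFun (m := fun _ : ℕ × ℕ => (⊤ : MeasurableSpace ℕ)) (fun q ω => ω q) μ)
    (hident : ∀ v j val, μ {ω : ℕ × ℕ → ℕ | ω (v, j) = val} = μ {ω | ω (v, 0) = val})
    (hdep : ∀ i f g, (∀ v ∈ vbl i, f v = g v) → A i f = A i g) :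
    ∀ T : List WRow, μ (EvSet vbl A T)
      ≤ (T.map (fun r => μ {ω : ℕ × ℕ → ℕ | A r.1 (fun v => ω (v, 0)) = true})).prod := by
  intro T
  induction T with
  | nil =>
    have h : EvSet vbl A ([] : List WRow) = Set.univ := by
      ext ω; simp [EvSet]
    rw [h, measure_univ]
    simp
  | cons r T' ih =>
    -- split the event
    set B₀ : Set (ℕ × ℕ → ℕ) :=
      {ω | A r.1 (fun v => ω (v, cntvF vbl T' v)) = true} with hB₀
    have hsplit : EvSet vbl A (r :: T') = B₀ ∩ EvSet vbl A T' := by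
      ext ω
      simp only [EvSet, Set.mem_inter_iff, Set.mem_setOf_eq, hB₀]
      constructor
      · intro h
        refine ⟨by simpa using h 0 (by simp), ?_⟩
        intro k hk
        have := h (k+1) (by simp; omega)
        simpa using this
      · rintro ⟨h0, h⟩ k hk
        cases k with
        | zero => simpa using h0
        | succ k =>
          have := h k (by simp at hk; omega)
          simpa using this
    -- independence
    set Q0 : Finset (ℕ × ℕ) := (vbl r.1).image (fun v => (v, cntvF vbl T' v)) with hQ0
    set Q1 : Finset (ℕ × ℕ) := (Finset.range T'.length).biUnion
      (fun k => (vbl ((T'.getD k (0,0,0)).1)).image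
        (fun v => (v, cntvF vbl (T'.drop (k+1)) v))) with hQ1
    have hdisj : Disjoint Q0 Q1 := by
      rw [Finset.disjoint_left]
      rintro q hq0 hq1
      obtain ⟨v, hv, rfl⟩ := Finset.mem_image.1 hq0
      obtain ⟨k, hk, hq⟩ := Finset.mem_biUnion.1 hq1
      obtain ⟨w, hw, heq⟩ := Finset.mem_image.1 hq
      have hvw : w = v := congrArg Prod.fst heq
      subst hvw
      have hcnteq : cntvF vbl (T'.drop (k+1)) w = cntvF vbl T' w := congrArg Prod.snd heq
      have hk' : k < T'.length := Finset.mem_range.1 hk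
      have h1 : cntvF vbl (T'.drop k) w ≤ cntvF vbl T' w :=
        List.Sublist.countP_le (List.drop_sublist k T')
      have hwk : w ∈ vbl (T'[k].1) := by
        rwa [List.getD_eq_getElem _ _ hk'] at hw
      have h2 : cntvF vbl (T'.drop k) w = cntvF vbl (T'.drop (k+1)) w + 1 := by
        rw [cntvF, List.drop_eq_getElem_cons hk', List.countP_cons]
        simp [cntvF, hwk]
      omega
    set X : (ℕ × ℕ → ℕ) → (↥Q0 → ℕ) := fun ω q => ω ↑q with hX
    set Y : (ℕ × ℕ → ℕ) → (↥Q1 → ℕ) := fun ω q => ω ↑q with hY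
    have hXY : IndepFun X Y μ :=
      hiid.indepFun_finset Q0 Q1 hdisj (fun q => measurable_pi_apply q)
    set SA : Set (↥Q0 → ℕ) := {g | A r.1
      (fun v => if h : (v, cntvF vbl T' v) ∈ Q0 then g ⟨(v, cntvF vbl T' v), h⟩ else 0)
        = true} with hSA
    set SB : Set (↥Q1 → ℕ) := {g | ∀ k, k < T'.length → A ((T'.getD k (0,0,0)).1)
      (fun v => if h : (v, cntvF vbl (T'.drop (k+1)) v) ∈ Q1 then
        g ⟨(v, cntvF vbl (T'.drop (k+1)) v), h⟩ else 0) = true} with hSB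
    have e1 : X ⁻¹' SA = B₀ := by
      ext ω
      simp only [Set.mem_preimage, Set.mem_setOf_eq, hSA, hB₀]
      have key : A r.1 (fun v => if h : (v, cntvF vbl T' v) ∈ Q0 then
          X ω ⟨(v, cntvF vbl T' v), h⟩ else 0) = A r.1 (fun v => ω (v, cntvF vbl T' v)) := by
        apply hdep
        intro v hv
        rw [dif_pos (Finset.mem_image_of_mem _ hv)]
      rw [key]
    have e2 : Y ⁻¹' SB = EvSet vbl A T' := by
      ext ω
      simp only [Set.mem_preimage, Set.mem_setOf_eq, hSB, EvSet]
      have key : ∀ k, k < T'.length → (A ((T'.getD k (0,0,0)).1)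
          (fun v => if h : (v, cntvF vbl (T'.drop (k+1)) v) ∈ Q1 then
            Y ω ⟨(v, cntvF vbl (T'.drop (k+1)) v), h⟩ else 0)
          = A ((T'.getD k (0,0,0)).1) (fun v => ω (v, cntvF vbl (T'.drop (k+1)) v))) := by
        intro k hk
        apply hdep
        intro v hv
        have hmem : (v, cntvF vbl (T'.drop (k+1)) v) ∈ Q1 :=
          Finset.mem_biUnion.2 ⟨k, Finset.mem_range.2 hk, Finset.mem_image_of_mem _ hv⟩
        rw [dif_pos hmem]
      constructor
      · intro h k hk; rw [← key k hk]; exact h k hk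
      · intro h k hk; rw [key k hk]; exact h k hk
    have hmul : μ (B₀ ∩ EvSet vbl A T') = μ B₀ * μ (EvSet vbl A T') := by
      rw [← e1, ← e2]
      exact hXY.measure_inter_preimage_eq_mul SA SB SA.to_countable.measurableSet
        SB.to_countable.measurableSet
    have hB0 : μ B₀ = μ {ω : ℕ × ℕ → ℕ | A r.1 (fun v => ω (v, 0)) = true} :=
      MTmeas.measEv μ vbl A r.1 hiid hident hdep (fun v => cntvF vbl T' v)
    rw [hsplit, hmul, hB0, List.map_cons, List.prod_cons]
    exact mul_le_mul_right ih _

end MTmeas2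



/-- Lemma 1: for every witness tree `T`, the probability that `T` appears at
some step of the Moser–Tardos algorithm is at most the product, over all
vertices of `T`, of the probabilities of the labeling events.

`μ` is the distribution of the random table: all entries are mutually
independent and, for each variable, identically distributed; each event `A i`
depends only on the variables in `vbl i`. -/
theorem witness_tree_probability_bound
    (μ : Measure (ℕ × ℕ → ℕ)) [IsProbabilityMeasure μ]
    (hiid : iIndepFun (m := fun _ : ℕ × ℕ => (⊤ : MeasurableSpace ℕ))
      (fun q ω => ω q) μ)
    (hident : ∀ v j val, μ {ω | ω (v, j) = val} = μ {ω | ω (v, 0) = val})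
    (Nev : ℕ) (vbl : ℕ → Finset ℕ) (A : ℕ → (ℕ → ℕ) → Bool)
    (hdep : ∀ i f g, (∀ v ∈ vbl i, f v = g v) → A i f = A i g)
    (T : List WRow) (i : ℕ) :
    μ {ω | ∃ t, mtLog Nev vbl A ω t = some i ∧ mtTree Nev vbl A ω i t = T} ≤
      (T.map (fun r => μ {ω | A r.1 (fun v => ω (v, 0)) = true})).prod := by
  have hsub : {ω | ∃ t, mtLog Nev vbl A ω t = some i ∧ mtTree Nev vbl A ω i t = T}
      ⊆ MTmeas2.EvSet vbl A T := by
    rintro ω ⟨t, hlog, htree⟩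
    subst htree
    simp only [MTmeas2.EvSet, Set.mem_setOf_eq]
    intro k hk
    obtain ⟨σ, hσlog, hσcnt⟩ := MTaux.key Nev vbl A ω i t hlog k hk
    rw [mtLog, mtPick] at hσlog
    have hA : A ((mtTree Nev vbl A ω i t)[k].1)
        (fun v => ω (v, mtCnt Nev vbl A ω σ v)) = true := by
      have := List.find?_some hσlog
      simpa using this
    have heq : A ((mtTree Nev vbl A ω i t)[k].1)
          (fun v => ω (v, cntvF vbl ((mtTree Nev vbl A ω i t).drop (k+1)) v))
        = A ((mtTree Nev vbl A ω i t)[k].1)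
          (fun v => ω (v, mtCnt Nev vbl A ω σ v)) :=
      hdep _ _ _ (fun v hv => by rw [hσcnt v hv])
    rw [List.getD_eq_getElem _ _ hk, heq]
    exact hA
  exact le_trans (measure_mono hsub) (MTmeas2.evBound μ vbl A hiid hident hdep T)
end

section
/- Galton–Watson comparison: Fix i, and assume Pr[A_j] ≤ z_j ∏_{l≠j, A_l∈N(A_j)} (1−z_l) for all j. For every finite witness tree T with root label A_i, Pr[T appears during the Moser–Tardos algorithm] ≤ (z_i/(1−z_i)) · Pr[T is produced by the Galton–Watson process], where the GW process starts from a root labeled i and independently attaches to each vertex labeled j a son labeled l with probability z_l, for each neighbor A_l of A_j (at most one son per label). -/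
/-- row of a witness tree list -/
def rowOf (T : List WRow) (k : ℕ) : WRow := T.getD k (0,0,0)

lemma mem_enumSwap_iff {α : Type*} {l : List α} {q : ℕ × α} :
    q ∈ l.zipIdx.map Prod.swap ↔ l[q.1]? = some q.2 := by
  rw [List.mem_map]
  constructor
  · rintro ⟨p, hp, rfl⟩; exact List.mem_zipIdx_iff_getElem?.mp hp
  · intro h; exact ⟨q.swap, List.mem_zipIdx_iff_getElem?.mpr h, rfl⟩

lemma countP_eq_sum_range {α : Type*} (l : List α) (p : α → Bool) (d : α) :
    l.countP p = ∑ k ∈ Finset.range l.length, if p (l.getD k d) then 1 else 0 := by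
  induction l with
  | nil => simp
  | cons a l ih =>
    rw [List.countP_cons, List.length_cons, Finset.sum_range_succ']
    simp [ih, Nat.add_comm]

lemma prefix_getD {α : Type*} {l₁ l₂ : List α} (h : l₁ <+: l₂) {k : ℕ}
    (hk : k < l₁.length) (d : α) : l₂.getD k d = l₁.getD k d := by
  obtain ⟨l₃, rfl⟩ := h
  rw [List.getD_eq_getElem?_getD, List.getD_eq_getElem?_getD,
    List.getElem?_append_left hk]

lemma row_append_lt (vs : List WRow) (r : WRow) {k : ℕ} (hk : k < vs.length) :
    rowOf (vs ++ [r]) k = rowOf vs k :=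
  prefix_getD ⟨[r], rfl⟩ hk _

lemma row_append_self (vs : List WRow) (r : WRow) :
    rowOf (vs ++ [r]) vs.length = r := by
  simp [rowOf, List.getD_eq_getElem?_getD, List.getElem?_append_right (le_refl _)]

lemma wstep_cases (Nb : ℕ → ℕ → Bool) (vs : List WRow) (s : ℕ) :
    wstep Nb vs s = vs ∨
    ∃ p, p < vs.length ∧ Nb (rowOf vs p).1 s = true ∧
      wstep Nb vs s = vs ++ [(s, (rowOf vs p).2.1 + 1, p)] ∧
      (∀ m, m < vs.length → Nb (rowOf vs m).1 s = true →
        (rowOf vs m).2.1 ≤ (rowOf vs p).2.1) := by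
  unfold wstep
  rcases h : ((vs.zipIdx.map Prod.swap).filter (fun q => Nb q.2.1 s)).argmax (fun q => q.2.2.1) with _ | q
  · rw [h]; exact Or.inl rfl
  · rw [h]; refine Or.inr ?_
    have hq := List.argmax_mem h
    rw [List.mem_filter] at hq
    obtain ⟨hq1, hq2⟩ := hq
    have hq1' := mem_enumSwap_iff.mp hq1
    rw [List.getElem?_eq_some_iff] at hq1'
    obtain ⟨hlt, hget⟩ := hq1'
    have hrow : rowOf vs q.1 = q.2 := by
      simp [rowOf, List.getD_eq_getElem?_getD, List.getElem?_eq_getElem hlt, hget]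
    refine ⟨q.1, hlt, by rw [hrow]; exact hq2, by rw [hrow], ?_⟩
    intro m hm hnb
    have hmem : (m, rowOf vs m) ∈ (vs.zipIdx.map Prod.swap).filter (fun q => Nb q.2.1 s) := by
      rw [List.mem_filter]
      refine ⟨mem_enumSwap_iff.mpr ?_, hnb⟩
      simp [rowOf, List.getD_eq_getElem?_getD, List.getElem?_eq_getElem hm]
    have := List.le_of_mem_argmax hmem h
    simpa [hrow] using this

lemma wstep_grow (Nb : ℕ → ℕ → Bool) (vs : List WRow) (s : ℕ) {k : ℕ}
    (hk : k < vs.length) (hnb : Nb (rowOf vs k).1 s = true) :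
    wstep Nb vs s ≠ vs := by
  unfold wstep
  rcases h : ((vs.zipIdx.map Prod.swap).filter (fun q => Nb q.2.1 s)).argmax (fun q => q.2.2.1) with _ | q
  · exfalso
    rw [List.argmax_eq_none, List.filter_eq_nil_iff] at h
    refine h (k, rowOf vs k) ?_ (by simpa using hnb)
    refine mem_enumSwap_iff.mpr ?_
    simp [rowOf, List.getD_eq_getElem?_getD, List.getElem?_eq_getElem hk]
  · rw [h]; simp

lemma wstep_prefix (Nb : ℕ → ℕ → Bool) (vs : List WRow) (s : ℕ) :
    vs <+: wstep Nb vs s := by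
  rcases wstep_cases Nb vs s with h | ⟨p, _, _, h, _⟩ <;> rw [h]
  exact ⟨[_], rfl⟩

lemma foldl_wstep_prefix (Nb : ℕ → ℕ → Bool) (l : List ℕ) (vs : List WRow) :
    vs <+: l.foldl (wstep Nb) vs := by
  induction l generalizing vs with
  | nil => exact List.prefix_refl _
  | cons a l ih => exact (wstep_prefix Nb vs a).trans (ih _)

lemma wbuild_row_zero (Nb : ℕ → ℕ → Bool) (root : ℕ) (log : List ℕ) :
    rowOf (wbuild Nb root log) 0 = (root, 0, 0) ∧ 0 < (wbuild Nb root log).length := by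
  have h := foldl_wstep_prefix Nb log [(root, 0, 0)]
  have h1 : (1 : ℕ) ≤ (wbuild Nb root log).length := by
    have := h.length_le; simpa [wbuild] using this
  exact ⟨prefix_getD h (by simp) _, by omega⟩

section Alg

variable (Nev : ℕ) (vbl : ℕ → Finset ℕ) (A : ℕ → (ℕ → ℕ) → Bool) (ω : ℕ × ℕ → ℕ)

/-- partial witness tree covering resamplings in `[t', t)` plus the root at `t`. -/
def segW (i t t' : ℕ) : List WRow :=
  wbuild (nbOf vbl) i (((List.range' t' (t - t')).filterMap (mtLog Nev vbl A ω)).reverse)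

/-- whether the resampling at step `σ` hits the variable `x`. -/
def hitB (x σ : ℕ) : Bool :=
  match mtLog Nev vbl A ω σ with
  | some a => decide (x ∈ vbl a)
  | none => false

lemma segW_last (i t : ℕ) : segW Nev vbl A ω i t t = [(i, 0, 0)] := by
  simp [segW, wbuild]

lemma segW_step (i t t' : ℕ) (h : t' < t) :
    segW Nev vbl A ω i t t' =
      (match mtLog Nev vbl A ω t' with
       | none => segW Nev vbl A ω i t (t' + 1)
       | some a => wstep (nbOf vbl) (segW Nev vbl A ω i t (t' + 1)) a) := by
  have h1 : t - t' = (t - (t' + 1)) + 1 := by omega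
  rw [segW, h1, List.range'_succ]
  rcases hlog : mtLog Nev vbl A ω t' with _ | a
  · simp [hlog, segW]
  · simp only [List.filterMap_cons, hlog, List.reverse_cons]
    rw [wbuild, List.foldl_append]
    rfl

lemma segW_zero (i t : ℕ) : segW Nev vbl A ω i t 0 = mtTree Nev vbl A ω i t := by
  rw [segW, mtTree, mtList, Nat.sub_zero, List.range_eq_range']

lemma segW_step_prefix (i t t' : ℕ) (h : t' < t) :
    segW Nev vbl A ω i t (t' + 1) <+: segW Nev vbl A ω i t t' := by
  rw [segW_step Nev vbl A ω i t t' h]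
  rcases mtLog Nev vbl A ω t' with _ | a
  · exact List.prefix_refl _
  · exact wstep_prefix _ _ _

lemma segW_prefix (i t : ℕ) {t' t'' : ℕ} (h1 : t' ≤ t'') (h2 : t'' ≤ t) :
    segW Nev vbl A ω i t t'' <+: segW Nev vbl A ω i t t' := by
  induction t'' with
  | zero => rw [Nat.le_zero.mp h1]
  | succ n ih =>
    rcases Nat.lt_or_ge t' (n + 1) with h | h
    · exact (segW_step_prefix Nev vbl A ω i t n (by omega)).trans
        (ih (by omega) (by omega))
    · have : t' = n + 1 := by omega
      rw [this]

/-- the length increases by at most one at each step -/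
lemma segW_len (i t t' : ℕ) (h : t' < t) :
    (segW Nev vbl A ω i t t').length = (segW Nev vbl A ω i t (t' + 1)).length ∨
    ((segW Nev vbl A ω i t t').length = (segW Nev vbl A ω i t (t' + 1)).length + 1 ∧
      ∃ a, mtLog Nev vbl A ω t' = some a ∧
        segW Nev vbl A ω i t t' = wstep (nbOf vbl) (segW Nev vbl A ω i t (t' + 1)) a) := by
  rw [segW_step Nev vbl A ω i t t' h]
  rcases hlog : mtLog Nev vbl A ω t' with _ | a
  · exact Or.inl rfl
  · dsimp only
    rcases wstep_cases (nbOf vbl) (segW Nev vbl A ω i t (t' + 1)) a with hc | ⟨p, _, _, hc, _⟩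
    · rw [hc]; exact Or.inl rfl
    · rw [hc]; exact Or.inr ⟨by simp, a, rfl, hc ▸ rfl⟩

end Alg

section Alg2

variable (Nev : ℕ) (vbl : ℕ → Finset ℕ) (A : ℕ → (ℕ → ℕ) → Bool) (ω : ℕ × ℕ → ℕ)

/-- depth monotonicity: among rows containing a common variable `x`, later rows
are strictly deeper. -/
lemma segW_mono (i t x : ℕ) :
    ∀ d t', t' + d = t → ∀ k k', k < k' → k' < (segW Nev vbl A ω i t t').length →
      x ∈ vbl (rowOf (segW Nev vbl A ω i t t') k).1 →
      x ∈ vbl (rowOf (segW Nev vbl A ω i t t') k').1 →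
      (rowOf (segW Nev vbl A ω i t t') k).2.1 <
        (rowOf (segW Nev vbl A ω i t t') k').2.1 := by
  intro d
  induction d with
  | zero =>
    intro t' ht k k' hkk' hk'
    rw [Nat.add_zero] at ht
    subst ht
    rw [segW_last] at hk'
    simp at hk'
    omega
  | succ d ih =>
    intro t' ht k k' hkk' hk' hx hx'
    have hstep := segW_step Nev vbl A ω i t t' (by omega)
    rcases hlog : mtLog Nev vbl A ω t' with _ | a
    · rw [hlog] at hstep
      dsimp only at hstep
      rw [hstep] at hk' hx hx' ⊢
      exact ih (t' + 1) (by omega) k k' hkk' hk' hx hx'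
    · rw [hlog] at hstep
      dsimp only at hstep
      set V := segW Nev vbl A ω i t (t' + 1) with hV
      rcases wstep_cases (nbOf vbl) V a with hc | ⟨p, hp, hpnb, hc, hmax⟩
      · rw [hstep, hc] at hk' hx hx' ⊢
        exact ih (t' + 1) (by omega) k k' hkk' hk' hx hx'
      · rw [hstep, hc] at hk' hx hx' ⊢
        rw [List.length_append, List.length_singleton] at hk'
        have hk : k < V.length := by omega
        rw [row_append_lt V _ hk] at hx ⊢
        rcases Nat.lt_or_ge k' V.length with h2 | h2
        · rw [row_append_lt V _ h2] at hx' ⊢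
          exact ih (t' + 1) (by omega) k k' hkk' h2 hx hx'
        · have hk'' : k' = V.length := by omega
          rw [hk'', row_append_self] at hx' ⊢
          have hnb : nbOf vbl (rowOf V k).1 a = true := by
            simp only [nbOf, decide_eq_true_eq]
            exact ⟨x, Finset.mem_inter.mpr ⟨hx, hx'⟩⟩
          have := hmax k hk hnb
          simp only
          omega

lemma mtCnt_eq_countP (t' x : ℕ) :
    mtCnt Nev vbl A ω t' x = (List.range t').countP (hitB Nev vbl A ω x) := by
  induction t' with
  | zero => simp [mtCnt]
  | succ t' ih =>
    rw [List.range_succ, List.countP_append, List.countP_singleton]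
    have : mtCnt Nev vbl A ω (t' + 1) x =
        match mtLog Nev vbl A ω t' with
        | none => mtCnt Nev vbl A ω t' x
        | some a => if x ∈ vbl a then mtCnt Nev vbl A ω t' x + 1
            else mtCnt Nev vbl A ω t' x := by
      rw [mtCnt, mtLog]
      rcases h : mtPick Nev A (fun v => ω (v, mtCnt Nev vbl A ω t' v)) with _ | a <;> simp [h]
    rw [this]
    rcases h : mtLog Nev vbl A ω t' with _ | a
    · simp [hitB, h, ih]
    · by_cases hxa : x ∈ vbl a <;> simp [hitB, h, ih, hxa]

/-- counting: if `x` occurs in some row of `segW t₀`, then the number of rows of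
`segW t'` containing `x` equals that of `segW t₀` plus the hits in `[t', t₀)`. -/
lemma segW_count (i t x : ℕ) (t₀ : ℕ) (ht₀ : t₀ ≤ t)
    (hpres : ∃ r ∈ segW Nev vbl A ω i t t₀, x ∈ vbl r.1) :
    ∀ d t', t' + d = t₀ →
      (segW Nev vbl A ω i t t').countP (fun r => decide (x ∈ vbl r.1)) =
        (segW Nev vbl A ω i t t₀).countP (fun r => decide (x ∈ vbl r.1)) +
          (List.range' t' d).countP (hitB Nev vbl A ω x) := by
  intro d
  induction d with
  | zero =>
    intro t' ht
    rw [Nat.add_zero] at ht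
    subst ht
    simp
  | succ d ih =>
    intro t' ht
    have hstep := segW_step Nev vbl A ω i t t' (by omega)
    have hrange : List.range' t' (d + 1) = t' :: List.range' (t' + 1) d :=
      List.range'_succ (s := t') (n := d) (step := 1)
    rw [hrange, List.countP_cons]
    have ih' := ih (t' + 1) (by omega)
    rcases hlog : mtLog Nev vbl A ω t' with _ | a
    · rw [hlog] at hstep
      dsimp only at hstep
      rw [hstep, ih']
      simp [hitB, hlog]
    · rw [hlog] at hstep
      dsimp only at hstep
      set V := segW Nev vbl A ω i t (t' + 1) with hV
      have hhit : hitB Nev vbl A ω x t' = decide (x ∈ vbl a) := by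
        simp [hitB, hlog]
      by_cases hxa : x ∈ vbl a
      · -- x is hit: the new row must be appended
        obtain ⟨r, hr, hrx⟩ := hpres
        have hrV : r ∈ V := (segW_prefix Nev vbl A ω i t (by omega) ht₀).subset hr
        obtain ⟨m, hm, hmr⟩ := List.mem_iff_getElem.mp hrV
        have hrow : rowOf V m = r := by
          simp [rowOf, List.getD_eq_getElem?_getD, List.getElem?_eq_getElem hm, hmr]
        have hnb : nbOf vbl (rowOf V m).1 a = true := by
          simp only [nbOf, decide_eq_true_eq]
          exact ⟨x, Finset.mem_inter.mpr ⟨hrow ▸ hrx, hxa⟩⟩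
        rcases wstep_cases (nbOf vbl) V a with hc | ⟨p, hp, hpnb, hc, hmax⟩
        · exact absurd hc (wstep_grow (nbOf vbl) V a hm hnb)
        · rw [hstep, hc, List.countP_append, List.countP_singleton]
          rw [ih', hhit]
          simp [hxa]
          omega
      · -- x not hit: count unchanged
        have hcount : (segW Nev vbl A ω i t t').countP (fun r => decide (x ∈ vbl r.1)) =
            V.countP (fun r => decide (x ∈ vbl r.1)) := by
          rcases wstep_cases (nbOf vbl) V a with hc | ⟨p, hp, hpnb, hc, hmax⟩
          · rw [hstep, hc]
          · rw [hstep, hc, List.countP_append, List.countP_singleton]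
            simp [hxa]
        rw [hcount, ih', hhit]
        simp [hxa]

/-- every non-root row was appended at a unique time step -/
lemma segW_time (i t : ℕ) :
    ∀ d t', t' + d = t → ∀ k, 1 ≤ k → k < (segW Nev vbl A ω i t t').length →
      ∃ τ, t' ≤ τ ∧ τ < t ∧ ∃ a, mtLog Nev vbl A ω τ = some a ∧
        (segW Nev vbl A ω i t (τ + 1)).length = k ∧
        segW Nev vbl A ω i t τ = wstep (nbOf vbl) (segW Nev vbl A ω i t (τ + 1)) a ∧
        (segW Nev vbl A ω i t τ).length = k + 1 := by
  intro d
  induction d with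
  | zero =>
    intro t' ht k hk1 hk2
    rw [Nat.add_zero] at ht
    subst ht
    rw [segW_last] at hk2
    simp at hk2
    omega
  | succ d ih =>
    intro t' ht k hk1 hk2
    rcases Nat.lt_or_ge k (segW Nev vbl A ω i t (t' + 1)).length with h | h
    · obtain ⟨τ, h1, h2, rest⟩ := ih (t' + 1) (by omega) k hk1 h
      exact ⟨τ, by omega, h2, rest⟩
    · rcases segW_len Nev vbl A ω i t t' (by omega) with hl | ⟨hl, a, hlog, hw⟩
      · omega
      · have hk : k = (segW Nev vbl A ω i t (t' + 1)).length := by omega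
        exact ⟨t', le_refl _, by omega, a, hlog, hk.symm, hw, by omega⟩

end Alg2

/-- the coordinate-depth of the variable `x` for a vertex at depth `dep`. -/
def Dfn (vbl : ℕ → Finset ℕ) (T : List WRow) (dep x : ℕ) : ℕ :=
  T.countP (fun r => decide (x ∈ vbl r.1) && decide (dep < r.2.1))

section Count

variable (vbl : ℕ → Finset ℕ)

lemma count_key (T : List WRow) (k : ℕ) (hk : k < T.length) (x : ℕ)
    (hmono : ∀ m m', m < m' → m' < T.length → x ∈ vbl (rowOf T m).1 →
      x ∈ vbl (rowOf T m').1 → (rowOf T m).2.1 < (rowOf T m').2.1)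
    (hxk : x ∈ vbl (rowOf T k).1) :
    T.countP (fun r => decide (x ∈ vbl r.1)) =
      (∑ m ∈ Finset.range (k + 1), if x ∈ vbl (rowOf T m).1 then 1 else 0) +
        Dfn vbl T (rowOf T k).2.1 x := by
  have h1 : T.countP (fun r => decide (x ∈ vbl r.1)) =
      ∑ m ∈ Finset.range T.length, if x ∈ vbl (rowOf T m).1 then 1 else 0 := by
    rw [countP_eq_sum_range T _ (0,0,0)]
    exact Finset.sum_congr rfl (fun m _ => by simp [rowOf])
  have h2 : Dfn vbl T (rowOf T k).2.1 x =
      ∑ m ∈ Finset.range T.length,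
        if x ∈ vbl (rowOf T m).1 ∧ (rowOf T k).2.1 < (rowOf T m).2.1 then 1 else 0 := by
    rw [Dfn, countP_eq_sum_range T _ (0,0,0)]
    exact Finset.sum_congr rfl (fun m _ => by simp [rowOf])
  rw [h1, h2]
  have hsplit : ∀ f : ℕ → ℕ, ∑ m ∈ Finset.range T.length, f m =
      (∑ m ∈ Finset.range (k + 1), f m) + ∑ m ∈ Finset.Ico (k + 1) T.length, f m := by
    intro f
    have h := Finset.sum_Ico_consecutive f (Nat.zero_le (k + 1))
      (show k + 1 ≤ T.length by omega)
    simp only [Finset.range_eq_Ico]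
    exact h.symm
  rw [hsplit, hsplit]
  have hz : ∑ m ∈ Finset.range (k + 1),
      (if x ∈ vbl (rowOf T m).1 ∧ (rowOf T k).2.1 < (rowOf T m).2.1 then 1 else 0) = 0 := by
    refine Finset.sum_eq_zero (fun m hm => ?_)
    rw [Finset.mem_range] at hm
    rw [if_neg]
    rintro ⟨hx, hd⟩
    rcases Nat.lt_or_ge m k with h | h
    · exact absurd (hmono m k h hk hx hxk) (by omega)
    · have : m = k := by omega
      subst this; omega
  have he : ∑ m ∈ Finset.Ico (k + 1) T.length,
      (if x ∈ vbl (rowOf T m).1 ∧ (rowOf T k).2.1 < (rowOf T m).2.1 then 1 else 0) =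
      ∑ m ∈ Finset.Ico (k + 1) T.length, (if x ∈ vbl (rowOf T m).1 then 1 else 0) := by
    refine Finset.sum_congr rfl (fun m hm => ?_)
    rw [Finset.mem_Ico] at hm
    by_cases hx : x ∈ vbl (rowOf T m).1
    · rw [if_pos ⟨hx, hmono k m (by omega) hm.2 hxk hx⟩, if_pos hx]
    · rw [if_neg (fun h => hx h.1), if_neg hx]
  rw [hz, he]
  omega

end Count

section Main

variable (Nev : ℕ) (vbl : ℕ → Finset ℕ) (A : ℕ → (ℕ → ℕ) → Bool) (ω : ℕ × ℕ → ℕ)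

lemma mtLog_true {τ a : ℕ} (h : mtLog Nev vbl A ω τ = some a) :
    A a (fun v => ω (v, mtCnt Nev vbl A ω τ v)) = true ∧ a < Nev := by
  rw [mtLog, mtPick] at h
  constructor
  · simpa using List.find?_some h
  · simpa using List.mem_of_find?_eq_some h

/-- The key computation: if the tree appears, each vertex's event holds on the
slice of the table given by `Dfn`. -/
lemma appears_mem (hdep : ∀ i f g, (∀ v ∈ vbl i, f v = g v) → A i f = A i g)
    (i t : ℕ) (hlog : mtLog Nev vbl A ω t = some i) (k : ℕ)
    (hk : k < (mtTree Nev vbl A ω i t).length) :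
    A (rowOf (mtTree Nev vbl A ω i t) k).1
      (fun x => ω (x, Dfn vbl (mtTree Nev vbl A ω i t)
        (rowOf (mtTree Nev vbl A ω i t) k).2.1 x)) = true := by
  set T := mtTree Nev vbl A ω i t with hT
  have hT0 : T = segW Nev vbl A ω i t 0 := (segW_zero Nev vbl A ω i t).symm
  have hmono : ∀ x m m', m < m' → m' < T.length → x ∈ vbl (rowOf T m).1 →
      x ∈ vbl (rowOf T m').1 → (rowOf T m).2.1 < (rowOf T m').2.1 := by
    intro x m m' h1 h2 h3 h4
    rw [hT0] at h2 h3 h4 ⊢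
    exact segW_mono Nev vbl A ω i t x t 0 (by omega) m m' h1 h2 h3 h4
  -- produce the resampling time
  have key : ∃ τ a, τ ≤ t ∧ mtLog Nev vbl A ω τ = some a ∧ a = (rowOf T k).1 ∧
      (segW Nev vbl A ω i t τ).length = k + 1 ∧
      segW Nev vbl A ω i t τ <+: T := by
    rcases Nat.eq_zero_or_pos k with rfl | hk1
    · refine ⟨t, i, le_refl t, hlog, ?_, ?_, ?_⟩
      · have := wbuild_row_zero (nbOf vbl) i ((mtList Nev vbl A ω t).reverse)
        rw [← mtTree, ← hT] at this
        rw [this.1]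
      · rw [segW_last]; rfl
      · rw [segW_last, hT0]
        have h2 := segW_prefix Nev vbl A ω i t (Nat.zero_le t) (le_refl t)
        rwa [segW_last] at h2
    · obtain ⟨τ, hτ1, hτ2, a, ha, hlen1, hw, hlen2⟩ :=
        segW_time Nev vbl A ω i t t 0 (by omega) k hk1 (by rw [← hT0]; exact hk)
      refine ⟨τ, a, by omega, ha, ?_, hlen2, by rw [hT0]; exact segW_prefix Nev vbl A ω i t (Nat.zero_le τ) (by omega)⟩
      -- the row k of T is the appended row, whose label is a
      rcases wstep_cases (nbOf vbl) (segW Nev vbl A ω i t (τ + 1)) a with hc | ⟨p, hp, hpnb, hc, _⟩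
      · rw [hc] at hw; rw [hw] at hlen2; omega
      · rw [hc] at hw
        have hpre : segW Nev vbl A ω i t τ <+: T := by
          rw [hT0]; exact segW_prefix Nev vbl A ω i t (Nat.zero_le τ) (by omega)
        have : rowOf T k = rowOf (segW Nev vbl A ω i t τ) k :=
          prefix_getD hpre (by omega) _
        rw [this, hw, ← hlen1, row_append_self]
  obtain ⟨τ, a, hτt, ha, haeq, hlen, hpre⟩ := key
  have hAtrue := (mtLog_true Nev vbl A ω ha).1
  subst haeq
  refine Eq.trans (hdep (rowOf T k).1 _ _ (fun v hv => ?_)) hAtrue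
  suffices hsuff : Dfn vbl T (rowOf T k).2.1 v = mtCnt Nev vbl A ω τ v by rw [hsuff]
  -- Dfn T (dep k) v = mtCnt τ v
  have hrowk : rowOf (segW Nev vbl A ω i t τ) k = rowOf T k :=
    (prefix_getD hpre (show k < (segW Nev vbl A ω i t τ).length by omega)
      ((0,0,0) : WRow)).symm
  have hpres : ∃ r ∈ segW Nev vbl A ω i t τ, v ∈ vbl r.1 := by
    refine ⟨rowOf (segW Nev vbl A ω i t τ) k, ?_, by rw [hrowk]; exact hv⟩
    have : k < (segW Nev vbl A ω i t τ).length := by omega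
    rw [rowOf, List.getD_eq_getElem _ _ this]
    exact List.getElem_mem this
  have hcount := segW_count Nev vbl A ω i t v τ hτt hpres τ 0 (by omega)
  rw [← hT0] at hcount
  have hrange : List.range' 0 τ = List.range τ := (List.range_eq_range' (n := τ)).symm
  rw [hrange] at hcount
  have hcnt : mtCnt Nev vbl A ω τ v = (List.range τ).countP (hitB Nev vbl A ω v) :=
    mtCnt_eq_countP Nev vbl A ω τ v
  -- countP of the prefix equals the partial sum
  have hparts : (segW Nev vbl A ω i t τ).countP (fun r => decide (v ∈ vbl r.1)) =
      ∑ m ∈ Finset.range (k + 1), if v ∈ vbl (rowOf T m).1 then 1 else 0 := by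
    rw [countP_eq_sum_range _ _ (0,0,0), hlen]
    refine Finset.sum_congr rfl (fun m hm => ?_)
    rw [Finset.mem_range] at hm
    have : rowOf T m = rowOf (segW Nev vbl A ω i t τ) m := prefix_getD hpre (by omega) _
    simp [rowOf] at this ⊢
    rw [this]
  have hck := count_key vbl T k hk v (hmono v) hv
  rw [hcnt]
  omega

end Main

lemma Dfn_lt (vbl : ℕ → Finset ℕ) (T : List WRow) {k k' : ℕ} (x : ℕ)
    (hkk' : k < k') (hk' : k' < T.length)
    (hmono : ∀ m m', m < m' → m' < T.length → x ∈ vbl (rowOf T m).1 →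
      x ∈ vbl (rowOf T m').1 → (rowOf T m).2.1 < (rowOf T m').2.1)
    (hx : x ∈ vbl (rowOf T k).1) (hx' : x ∈ vbl (rowOf T k').1) :
    Dfn vbl T (rowOf T k').2.1 x < Dfn vbl T (rowOf T k).2.1 x := by
  have hrep : ∀ dep : ℕ, Dfn vbl T dep x =
      ∑ m ∈ Finset.range T.length,
        if x ∈ vbl (rowOf T m).1 ∧ dep < (rowOf T m).2.1 then 1 else 0 := by
    intro dep
    rw [Dfn, countP_eq_sum_range T _ (0,0,0)]
    exact Finset.sum_congr rfl (fun m _ => by simp [rowOf])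
  rw [hrep, hrep]
  have hdep := hmono k k' hkk' hk' hx hx'
  refine Finset.sum_lt_sum (fun m _ => ?_) ⟨k', Finset.mem_range.mpr hk', ?_⟩
  · by_cases h : x ∈ vbl (rowOf T m).1 ∧ (rowOf T k').2.1 < (rowOf T m).2.1
    · rw [if_pos h, if_pos ⟨h.1, by omega⟩]
    · rw [if_neg h]
      split <;> omega
  · rw [if_neg (by omega), if_pos ⟨hx', hdep⟩]
    omega

section Struct

variable (Nev : ℕ) (vbl : ℕ → Finset ℕ) (A : ℕ → (ℕ → ℕ) → Bool) (ω : ℕ × ℕ → ℕ)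

lemma tree_mono (i t : ℕ) (x : ℕ) :
    ∀ m m', m < m' → m' < (mtTree Nev vbl A ω i t).length →
      x ∈ vbl (rowOf (mtTree Nev vbl A ω i t) m).1 →
      x ∈ vbl (rowOf (mtTree Nev vbl A ω i t) m').1 →
      (rowOf (mtTree Nev vbl A ω i t) m).2.1 <
        (rowOf (mtTree Nev vbl A ω i t) m').2.1 := by
  intro m m' h1 h2 h3 h4
  rw [← segW_zero Nev vbl A ω i t] at h2 h3 h4 ⊢
  exact segW_mono Nev vbl A ω i t x t 0 (by omega) m m' h1 h2 h3 h4

lemma tree_struct (i t : ℕ) (k : ℕ) (hk1 : 1 ≤ k)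
    (hk : k < (mtTree Nev vbl A ω i t).length) :
    (rowOf (mtTree Nev vbl A ω i t) k).2.2 < k ∧
    (rowOf (mtTree Nev vbl A ω i t) k).2.1 =
      (rowOf (mtTree Nev vbl A ω i t) (rowOf (mtTree Nev vbl A ω i t) k).2.2).2.1 + 1 ∧
    nbOf vbl (rowOf (mtTree Nev vbl A ω i t) (rowOf (mtTree Nev vbl A ω i t) k).2.2).1
      (rowOf (mtTree Nev vbl A ω i t) k).1 = true ∧
    (rowOf (mtTree Nev vbl A ω i t) k).1 < Nev := by
  set T := mtTree Nev vbl A ω i t with hT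
  have hT0 : T = segW Nev vbl A ω i t 0 := (segW_zero Nev vbl A ω i t).symm
  obtain ⟨τ, hτ1, hτ2, a, ha, hlen1, hw, hlen2⟩ :=
    segW_time Nev vbl A ω i t t 0 (by omega) k hk1 (by rw [← hT0]; exact hk)
  set V := segW Nev vbl A ω i t (τ + 1) with hV
  rcases wstep_cases (nbOf vbl) V a with hc | ⟨p, hp, hpnb, hc, _⟩
  · rw [hc] at hw; rw [hw] at hlen2; omega
  · rw [hc] at hw
    have hpreτ : segW Nev vbl A ω i t τ <+: T := by
      rw [hT0]; exact segW_prefix Nev vbl A ω i t (Nat.zero_le τ) (by omega)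
    have hpreV : V <+: T := by
      rw [hT0, hV]; exact segW_prefix Nev vbl A ω i t (Nat.zero_le (τ+1)) (by omega)
    have hrowk : rowOf T k = (a, (rowOf V p).2.1 + 1, p) := by
      have h1 : rowOf T k = rowOf (segW Nev vbl A ω i t τ) k :=
        prefix_getD hpreτ (show k < (segW Nev vbl A ω i t τ).length by omega)
          ((0,0,0) : WRow)
      rw [h1, hw, ← hlen1, row_append_self]
    have hrowp : rowOf T p = rowOf V p :=
      prefix_getD hpreV (by omega) ((0,0,0) : WRow)
    rw [hrowk]
    refine ⟨by simpa using by omega, ?_, ?_, ?_⟩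
    · simp [hrowp]
    · simpa [hrowp] using hpnb
    · simpa using (mtLog_true Nev vbl A ω ha).2

lemma tree_root (i t : ℕ) :
    rowOf (mtTree Nev vbl A ω i t) 0 = (i, 0, 0) ∧
      0 < (mtTree Nev vbl A ω i t).length :=
  wbuild_row_zero (nbOf vbl) i ((mtList Nev vbl A ω t).reverse)

end Struct

open MeasureTheory ProbabilityTheory

lemma measurableSet_all {α : Type*} [Finite α] (X : Set (α → ℕ)) :
    MeasurableSet X := by
  have hsing : ∀ f : α → ℕ, MeasurableSet {f} := by
    intro f
    have : {f} = ⋂ a : α, (fun g : α → ℕ => g a) ⁻¹' {f a} := by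
      ext g
      simp [funext_iff]
    rw [this]
    exact MeasurableSet.iInter (fun a =>
      measurable_pi_apply a (MeasurableSpace.measurableSet_top))
  rw [← Set.biUnion_of_singleton X]
  exact MeasurableSet.biUnion X.to_countable (fun f _ => hsing f)

section Meas

variable {μ : Measure (ℕ × ℕ → ℕ)} [IsProbabilityMeasure μ]

omit [IsProbabilityMeasure μ] in
lemma meas_cyl
    (hiid : iIndepFun (m := fun _ : ℕ × ℕ => (⊤ : MeasurableSpace ℕ)) (fun q ω => ω q) μ)
    (s : Finset (ℕ × ℕ)) (B : ℕ × ℕ → Set ℕ) :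
    μ (⋂ q ∈ s, (fun ω : ℕ × ℕ → ℕ => ω q) ⁻¹' B q) =
      ∏ q ∈ s, μ ((fun ω : ℕ × ℕ → ℕ => ω q) ⁻¹' B q) :=
  (iIndepFun_iff_measure_inter_preimage_eq_mul.mp hiid) s
    (fun _ _ => MeasurableSpace.measurableSet_top)

/-- the block event law does not depend on the row indices -/
lemma meas_block
    (hiid : iIndepFun (m := fun _ : ℕ × ℕ => (⊤ : MeasurableSpace ℕ)) (fun q ω => ω q) μ)
    (vbl : ℕ → Finset ℕ) (A : ℕ → (ℕ → ℕ) → Bool)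
    (hdep : ∀ i f g, (∀ v ∈ vbl i, f v = g v) → A i f = A i g)
    (hident : ∀ v j val, μ {ω | ω (v, j) = val} = μ {ω | ω (v, 0) = val})
    (j : ℕ) (D : ℕ → ℕ) :
    μ {ω | A j (fun x => ω (x, D x)) = true} =
      μ {ω | A j (fun x => ω (x, 0)) = true} := by
  classical
  have rep : ∀ D' : ℕ → ℕ, μ {ω | A j (fun x => ω (x, D' x)) = true} =
      ∑' g : (↥(vbl j) → ℕ),
        (if A j (fun x => if hx : x ∈ vbl j then g ⟨x, hx⟩ else 0) = true
          then ∏ x ∈ (vbl j).attach, μ {ω | ω (x.1, D' x.1) = g x} else 0) := by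
    intro D'
    set C : (↥(vbl j) → ℕ) → Set (ℕ × ℕ → ℕ) := fun g =>
      if A j (fun x => if hx : x ∈ vbl j then g ⟨x, hx⟩ else 0) = true
        then {ω : ℕ × ℕ → ℕ | ∀ x : ↥(vbl j), ω (x.1, D' x.1) = g x} else ∅ with hC
    have hE : {ω : ℕ × ℕ → ℕ | A j (fun x => ω (x, D' x)) = true} = ⋃ g, C g := by
      ext ω
      simp only [Set.mem_setOf_eq, Set.mem_iUnion]
      constructor
      · intro hω
        refine ⟨fun x => ω (x.1, D' x.1), ?_⟩
        have hc : A j (fun x => if hx : x ∈ vbl j then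
            (fun y : ↥(vbl j) => ω (y.1, D' y.1)) ⟨x, hx⟩ else 0) = true := by
          rw [hdep j _ (fun x => ω (x, D' x)) (fun v hv => by simp [hv])]
          exact hω
        rw [hC]
        simp only [if_pos hc]
        exact fun x => rfl
      · rintro ⟨g, hg⟩
        rw [hC] at hg
        by_cases hA : A j (fun x => if hx : x ∈ vbl j then g ⟨x, hx⟩ else 0) = true
        · simp only [if_pos hA, Set.mem_setOf_eq] at hg
          rw [hdep j _ _ (fun v hv => ?_)]
          · exact hA
          · simp only [hv, dif_pos]
            exact hg ⟨v, hv⟩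
        · simp only [if_neg hA] at hg
          exact absurd hg (Set.notMem_empty ω)
    have hdisj : Pairwise (Function.onFun Disjoint C) := by
      intro g g' hgg'
      simp only [Function.onFun, hC]
      by_cases hA : A j (fun x => if hx : x ∈ vbl j then g ⟨x, hx⟩ else 0) = true
      · by_cases hA' : A j (fun x => if hx : x ∈ vbl j then g' ⟨x, hx⟩ else 0) = true
        · rw [if_pos hA, if_pos hA', Set.disjoint_left]
          intro ω hω hω'
          simp only [Set.mem_setOf_eq] at hω hω'
          exact hgg' (funext (fun x => (hω x).symm.trans (hω' x)))
        · rw [if_neg hA']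
          exact Set.disjoint_empty _
      · rw [if_neg hA]
        exact Set.empty_disjoint _
    have hmeas : ∀ g, MeasurableSet (C g) := by
      intro g
      rw [hC]
      by_cases hA : A j (fun x => if hx : x ∈ vbl j then g ⟨x, hx⟩ else 0) = true
      · simp only [if_pos hA]
        have : {ω : ℕ × ℕ → ℕ | ∀ x : ↥(vbl j), ω (x.1, D' x.1) = g x} =
            ⋂ x : ↥(vbl j), (fun ω : ℕ × ℕ → ℕ => ω (x.1, D' x.1)) ⁻¹' {g x} := by
          ext ω; simp
        rw [this]
        exact MeasurableSet.iInter (fun x =>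
          measurable_pi_apply _ (MeasurableSpace.measurableSet_top))
      · simp only [if_neg hA]
        exact MeasurableSet.empty
    rw [hE, measure_iUnion hdisj hmeas]
    congr 1
    funext g
    rw [hC]
    by_cases hA : A j (fun x => if hx : x ∈ vbl j then g ⟨x, hx⟩ else 0) = true
    · simp only [if_pos hA]
      have hset : {ω : ℕ × ℕ → ℕ | ∀ x : ↥(vbl j), ω (x.1, D' x.1) = g x} =
          ⋂ q ∈ (vbl j).attach.image (fun x : ↥(vbl j) => (x.1, D' x.1)),
            (fun ω : ℕ × ℕ → ℕ => ω q) ⁻¹'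
              (if hq : q.1 ∈ vbl j then {g ⟨q.1, hq⟩} else Set.univ) := by
        ext ω
        simp only [Set.mem_setOf_eq, Set.mem_iInter, Finset.mem_image,
          Finset.mem_attach, true_and]
        constructor
        · rintro h q ⟨x, rfl⟩
          rw [dif_pos x.2]
          simp only [Set.mem_preimage, Set.mem_singleton_iff]
          rw [h x]
        · intro h x
          have := h (x.1, D' x.1) ⟨x, rfl⟩
          rw [dif_pos x.2] at this
          simpa using this
      rw [hset, meas_cyl hiid]
      rw [Finset.prod_image (fun x _ y _ hxy =>
        Subtype.ext ((Prod.mk.injEq _ _ _ _ ▸ hxy).1))]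
      refine Finset.prod_congr rfl (fun x _ => ?_)
      rw [dif_pos x.2]
      rfl
    · simp only [if_neg hA, measure_empty]
  rw [rep D, rep (fun _ => 0)]
  congr 1
  funext g
  congr 1
  exact Finset.prod_congr rfl (fun x _ => hident x.1 (D x.1) (g x))

end Meas

section Meas2

variable {μ : Measure (ℕ × ℕ → ℕ)} [IsProbabilityMeasure μ]

/-- independence of the block events over disjoint coordinate blocks -/
lemma meas_blocks
    (hiid : iIndepFun (m := fun _ : ℕ × ℕ => (⊤ : MeasurableSpace ℕ)) (fun q ω => ω q) μ)
    (vbl : ℕ → Finset ℕ) (A : ℕ → (ℕ → ℕ) → Bool)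
    (hdep : ∀ i f g, (∀ v ∈ vbl i, f v = g v) → A i f = A i g)
    (J : ℕ → ℕ) (D : ℕ → ℕ → ℕ) :
    ∀ m : ℕ, (∀ k k' x, k < m → k' < m → k ≠ k' → x ∈ vbl (J k) → x ∈ vbl (J k') →
      D k x ≠ D k' x) →
    μ (⋂ k ∈ Finset.range m, {ω : ℕ × ℕ → ℕ | A (J k) (fun x => ω (x, D k x)) = true}) =
      ∏ k ∈ Finset.range m, μ {ω : ℕ × ℕ → ℕ | A (J k) (fun x => ω (x, D k x)) = true} := by
  classical
  intro m
  induction m with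
  | zero => simp
  | succ m ih =>
    intro hdisj
    -- the coordinate blocks
    set F : ℕ → Finset (ℕ × ℕ) := fun k => (vbl (J k)).image (fun x => (x, D k x)) with hF
    set S : Finset (ℕ × ℕ) := F m with hS
    set Tb : Finset (ℕ × ℕ) := (Finset.range m).biUnion F with hTb
    have hST : Disjoint S Tb := by
      rw [Finset.disjoint_left]
      intro q hqS hqT
      rw [hS, hF, Finset.mem_image] at hqS
      obtain ⟨x, hx, rfl⟩ := hqS
      rw [hTb, Finset.mem_biUnion] at hqT
      obtain ⟨k, hk, hqk⟩ := hqT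
      rw [hF, Finset.mem_image] at hqk
      obtain ⟨y, hy, hxy⟩ := hqk
      have hk' := Finset.mem_range.mp hk
      have h1 : y = x := congrArg Prod.fst hxy
      subst h1
      have h2 : D k y = D m y := congrArg Prod.snd hxy
      exact hdisj m k y (by omega) (by omega) (by omega) hx hy h2.symm
    have hmeasf : ∀ q : ℕ × ℕ, Measurable (fun ω : ℕ × ℕ → ℕ => ω q) :=
      fun q => measurable_pi_apply q
    have hind := hiid.indepFun_finset S Tb hST hmeasf
    set GS : Set (↥S → ℕ) := {h | A (J m)
      (fun x => if hx : (x, D m x) ∈ S then h ⟨(x, D m x), hx⟩ else 0) = true} with hGS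
    set GT : Set (↥Tb → ℕ) := ⋂ k ∈ Finset.range m, {h : ↥Tb → ℕ | A (J k)
      (fun x => if hx : (x, D k x) ∈ Tb then h ⟨(x, D k x), hx⟩ else 0) = true} with hGT
    have hpreS : (fun ω : ℕ × ℕ → ℕ => fun q : ↥S => ω q.1) ⁻¹' GS =
        {ω : ℕ × ℕ → ℕ | A (J m) (fun x => ω (x, D m x)) = true} := by
      ext ω
      show A (J m) (fun x => if hx : (x, D m x) ∈ S then ω (x, D m x) else 0) = true ↔ _
      rw [hdep (J m) _ (fun x => ω (x, D m x)) (fun v hv => by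
        rw [dif_pos (Finset.mem_image_of_mem _ hv)])]
      exact Iff.rfl
    have hmemT : ∀ k, k < m → ∀ x ∈ vbl (J k), (x, D k x) ∈ Tb := by
      intro k hk x hx
      rw [hTb, Finset.mem_biUnion]
      exact ⟨k, Finset.mem_range.mpr hk, Finset.mem_image_of_mem _ hx⟩
    have hpreT : (fun ω : ℕ × ℕ → ℕ => fun q : ↥Tb => ω q.1) ⁻¹' GT =
        ⋂ k ∈ Finset.range m,
          {ω : ℕ × ℕ → ℕ | A (J k) (fun x => ω (x, D k x)) = true} := by
      rw [hGT, Set.preimage_iInter₂]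
      refine Set.iInter₂_congr (fun k hk => ?_)
      ext ω
      show A (J k) (fun x => if hx : (x, D k x) ∈ Tb then ω (x, D k x) else 0) = true ↔ _
      rw [hdep (J k) _ (fun x => ω (x, D k x)) (fun v hv => by
        rw [dif_pos (hmemT k (Finset.mem_range.mp hk) v hv)])]
      exact Iff.rfl
    have hsplit2 : (⋂ k ∈ Finset.range (m + 1),
        {ω : ℕ × ℕ → ℕ | A (J k) (fun x => ω (x, D k x)) = true}) =
        ((fun ω : ℕ × ℕ → ℕ => fun q : ↥S => ω q.1) ⁻¹' GS) ∩
        ((fun ω : ℕ × ℕ → ℕ => fun q : ↥Tb => ω q.1) ⁻¹' GT) := by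
      rw [hpreS, hpreT, Finset.range_add_one, Finset.set_biInter_insert]
    rw [hsplit2, hind.measure_inter_preimage_eq_mul _ _
      (measurableSet_all GS) (measurableSet_all GT), hpreS, hpreT,
      Finset.prod_range_succ, ih (fun k k' x h1 h2 => hdisj k k' x (by omega) (by omega)),
      mul_comm]

end Meas2

/-- The labels of the sons of the vertex of index `idx` in a witness tree. -/
def childLabels (T : List WRow) (idx : ℕ) : List ℕ :=
  ((T.zipIdx.map Prod.swap).filter (fun q => q.2.2.2 == idx && !(q.1 == idx))).map (fun q => q.2.1)

/-- The probability that the Galton–Watson process produces exactly the tree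
`T`: starting from the root, each vertex labeled `j` independently gets a son
labeled `l` with probability `z l`, for each neighbor `l ∈ NbF j` (at most one
son per label); so each vertex labeled `j` contributes the factor
`∏_{l ∈ NbF j} (z l if a son labeled l is present, else 1 - z l)`. -/
def gwProb (z : ℕ → ℝ) (NbF : ℕ → Finset ℕ) (T : List WRow) : ℝ :=
  ((T.zipIdx.map Prod.swap).map (fun q =>
    ∏ l ∈ NbF q.2.1, if l ∈ childLabels T q.1 then z l else 1 - z l)).prod

lemma prod_enumFrom_map (f : ℕ × WRow → ℝ) :
    ∀ (l : List WRow) (n : ℕ), (((l.zipIdx n).map Prod.swap).map f).prod =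
      ∏ k ∈ Finset.range l.length, f (n + k, l.getD k (0,0,0)) := by
  intro l
  induction l with
  | nil => intro n; simp
  | cons a l ih =>
    intro n
    rw [List.zipIdx_cons, List.map_cons, List.map_cons, List.prod_cons, ih (n + 1),
      List.length_cons, Finset.prod_range_succ']
    rw [mul_comm]
    congr 1
    refine Finset.prod_congr rfl (fun k _ => ?_)
    have hnk : n + 1 + k = n + (k + 1) := by omega
    rw [List.getD_cons_succ, hnk]

lemma gwProb_eq (z : ℕ → ℝ) (NbF : ℕ → Finset ℕ) (T : List WRow) :
    gwProb z NbF T = ∏ k ∈ Finset.range T.length,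
      ∏ l ∈ NbF (rowOf T k).1, (if l ∈ childLabels T k then z l else 1 - z l) := by
  rw [gwProb]
  have h := prod_enumFrom_map
    (fun q => ∏ l ∈ NbF q.2.1, if l ∈ childLabels T q.1 then z l else 1 - z l) T 0
  rw [h]
  exact Finset.prod_congr rfl (fun k _ => by simp [rowOf])

lemma mem_childLabels (T : List WRow) (k l : ℕ) :
    l ∈ childLabels T k ↔ ∃ c, c < T.length ∧ (rowOf T c).2.2 = k ∧ c ≠ k ∧
      (rowOf T c).1 = l := by
  simp only [childLabels, List.mem_map, List.mem_filter]
  constructor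
  · rintro ⟨q, ⟨hq1, hq2⟩, hq3⟩
    have hq1' := mem_enumSwap_iff.mp (List.mem_map.mpr hq1)
    rw [List.getElem?_eq_some_iff] at hq1'
    obtain ⟨hlt, hget⟩ := hq1'
    simp only [Bool.and_eq_true, beq_iff_eq, Bool.not_eq_true', beq_eq_false_iff_ne] at hq2
    refine ⟨q.1, hlt, ?_, hq2.2, ?_⟩
    · rw [rowOf, List.getD_eq_getElem _ _ hlt, hget]; exact hq2.1
    · rw [rowOf, List.getD_eq_getElem _ _ hlt, hget]; exact hq3
  · rintro ⟨c, hc, hpar, hck, hlab⟩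
    refine ⟨(c, rowOf T c), ⟨?_, ?_⟩, hlab⟩
    · refine List.mem_map.mp (mem_enumSwap_iff.mpr ?_)
      simp [rowOf, List.getD_eq_getElem?_getD, List.getElem?_eq_getElem hc]
    · simp only [Bool.and_eq_true, beq_iff_eq, Bool.not_eq_true', beq_eq_false_iff_ne]
      exact ⟨hpar, hck⟩

/-- the Galton-Watson product identity -/
lemma gw_identity (z : ℕ → ℝ) (hz : ∀ j, z j ∈ Set.Ioo (0 : ℝ) 1)
    (NbF : ℕ → Finset ℕ) (T : List WRow)
    (hroot0 : (rowOf T 0).2.2 = 0)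
    (hpar : ∀ k, 1 ≤ k → k < T.length → (rowOf T k).2.2 < k ∧
      (rowOf T k).1 ∈ NbF (rowOf T (rowOf T k).2.2).1)
    (hsib : ∀ k k', 1 ≤ k → k < k' → k' < T.length →
      (rowOf T k).2.2 = (rowOf T k').2.2 → (rowOf T k).1 ≠ (rowOf T k').1) :
    gwProb z NbF T =
      (∏ c ∈ (Finset.range T.length).erase 0, (z (rowOf T c).1 / (1 - z (rowOf T c).1))) *
        ∏ k ∈ Finset.range T.length, ∏ l ∈ NbF (rowOf T k).1, (1 - z l) := by
  classical
  set w : ℕ → ℝ := fun l => z l / (1 - z l) with hw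
  set CF : ℕ → Finset ℕ := fun k =>
    (Finset.range T.length).filter (fun c => (rowOf T c).2.2 = k ∧ c ≠ k) with hCF
  -- members of CF k are ≥ 1 and < length
  have hCFmem : ∀ k c, c ∈ CF k → 1 ≤ c ∧ c < T.length ∧ (rowOf T c).2.2 = k ∧ c ≠ k := by
    intro k c hc
    rw [hCF, Finset.mem_filter, Finset.mem_range] at hc
    obtain ⟨h1, h2, h3⟩ := hc
    refine ⟨?_, h1, h2, h3⟩
    rcases Nat.eq_zero_or_pos c with rfl | h
    · rw [hroot0] at h2; omega
    · omega
  -- per-vertex factorization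
  have hvert : ∀ k ∈ Finset.range T.length,
      (∏ l ∈ NbF (rowOf T k).1, if l ∈ childLabels T k then z l else 1 - z l) =
        (∏ c ∈ CF k, w (rowOf T c).1) * ∏ l ∈ NbF (rowOf T k).1, (1 - z l) := by
    intro k hk
    have hzne : ∀ l : ℕ, (1 : ℝ) - z l ≠ 0 := fun l => by have := (hz l).2; intro h; linarith
    have step1 : ∀ l ∈ NbF (rowOf T k).1,
        (if l ∈ childLabels T k then z l else 1 - z l) =
          (if l ∈ childLabels T k then w l else 1) * (1 - z l) := by
      intro l _
      by_cases h : l ∈ childLabels T k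
      · rw [if_pos h, if_pos h, hw]
        exact (div_mul_cancel₀ _ (hzne l)).symm
      · rw [if_neg h, if_neg h, one_mul]
    rw [Finset.prod_congr rfl step1, Finset.prod_mul_distrib]
    congr 1
    -- ∏ (if l ∈ CL then w l else 1) over NbF = ∏ over CF k of w ∘ lab
    set t : Finset ℕ := (CF k).image (fun c => (rowOf T c).1) with ht
    have hCL : ∀ l, (l ∈ childLabels T k) ↔ l ∈ t := by
      intro l
      rw [mem_childLabels, ht, Finset.mem_image]
      constructor
      · rintro ⟨c, h1, h2, h3, h4⟩
        refine ⟨c, ?_, h4⟩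
        rw [hCF]
        exact Finset.mem_filter.mpr ⟨Finset.mem_range.mpr h1, h2, h3⟩
      · rintro ⟨c, hc, h4⟩
        obtain ⟨_, h1, h2, h3⟩ := hCFmem k c hc
        exact ⟨c, h1, h2, h3, h4⟩
    have hst : t ⊆ NbF (rowOf T k).1 := by
      intro l hl
      rw [ht, Finset.mem_image] at hl
      obtain ⟨c, hc, rfl⟩ := hl
      obtain ⟨h0, h1, h2, h3⟩ := hCFmem k c hc
      have := (hpar c h0 h1).2
      rwa [h2] at this
    calc (∏ l ∈ NbF (rowOf T k).1, if l ∈ childLabels T k then w l else 1)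
        = ∏ l ∈ NbF (rowOf T k).1, (if l ∈ t then w l else 1) :=
          Finset.prod_congr rfl (fun l _ => if_congr (hCL l) rfl rfl)
      _ = ∏ l ∈ NbF (rowOf T k).1 ∩ t, w l := Finset.prod_ite_mem _ _ _
      _ = ∏ l ∈ t, w l := by rw [Finset.inter_eq_right.mpr hst]
      _ = ∏ c ∈ CF k, w (rowOf T c).1 := by
          rw [ht, Finset.prod_image]
          intro c hc c' hc' hcc'
          by_contra hne
          obtain ⟨d0, d1, d2, d3⟩ := hCFmem k c hc
          obtain ⟨e0, e1, e2, e3⟩ := hCFmem k c' hc'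
          rcases Nat.lt_or_ge c c' with h | h
          · exact hsib c c' d0 h e1 (d2.trans e2.symm) hcc'
          · exact hsib c' c e0 (by omega) d1 (e2.trans d2.symm) hcc'.symm
  -- assemble
  rw [gwProb_eq, Finset.prod_congr rfl hvert, Finset.prod_mul_distrib]
  congr 1
  have hdisjCF : (↑(Finset.range T.length) : Set ℕ).PairwiseDisjoint CF := by
    intro k _ k' _ hkk'
    simp only [Function.onFun]
    rw [Finset.disjoint_left]
    intro c hc hc'
    exact hkk' (((hCFmem k c hc).2.2.1).symm.trans (hCFmem k' c hc').2.2.1)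
  have hUnion : (Finset.range T.length).biUnion CF = (Finset.range T.length).erase 0 := by
    ext c
    rw [Finset.mem_biUnion, Finset.mem_erase, Finset.mem_range]
    constructor
    · rintro ⟨k, _, hc⟩
      obtain ⟨h0, h1, _, _⟩ := hCFmem k c hc
      exact ⟨by omega, h1⟩
    · rintro ⟨h0, h1⟩
      have hc0 : 1 ≤ c := by omega
      obtain ⟨hlt, _⟩ := hpar c hc0 h1
      refine ⟨(rowOf T c).2.2, Finset.mem_range.mpr (by omega), ?_⟩
      rw [hCF, Finset.mem_filter, Finset.mem_range]
      exact ⟨h1, rfl, by omega⟩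
  rw [← hUnion, Finset.prod_biUnion hdisjCF]

lemma zterm (z : ℕ → ℝ) (hz : ∀ j, z j ∈ Set.Ioo (0 : ℝ) 1) (s : Finset ℕ) (j : ℕ) :
    z j * ∏ l ∈ s.erase j, (1 - z l) ≤ (z j / (1 - z j)) * ∏ l ∈ s, (1 - z l) := by
  have hne : (1 : ℝ) - z j ≠ 0 := by have := (hz j).2; intro h; linarith
  by_cases hj : j ∈ s
  · rw [← Finset.mul_prod_erase s _ hj, ← mul_assoc, div_mul_cancel₀ _ hne]
  · rw [Finset.erase_eq_of_notMem hj]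
    have hP : 0 ≤ ∏ l ∈ s, (1 - z l) :=
      Finset.prod_nonneg (fun l _ => by have := (hz l).2; linarith)
    refine mul_le_mul_of_nonneg_right ?_ hP
    rw [le_div_iff₀ (by have := (hz j).2; linarith)]
    have h1 := (hz j).1
    have h2 := (hz j).2
    nlinarith

/-- Galton–Watson comparison: under the LLL condition
`Pr[A j] ≤ z j · ∏_{l ≠ j, l ∈ N(j)} (1 - z l)`, every witness tree `T` with
root label `i` satisfies
`Pr[T appears in the algorithm] ≤ (z i / (1 - z i)) · Pr[T is produced by the
Galton–Watson process]`. -/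
theorem galton_watson_comparison
    (μ : Measure (ℕ × ℕ → ℕ)) [IsProbabilityMeasure μ]
    (hiid : iIndepFun (m := fun _ : ℕ × ℕ => (⊤ : MeasurableSpace ℕ))
      (fun q ω => ω q) μ)
    (hident : ∀ v j val, μ {ω | ω (v, j) = val} = μ {ω | ω (v, 0) = val})
    (Nev : ℕ) (vbl : ℕ → Finset ℕ) (A : ℕ → (ℕ → ℕ) → Bool)
    (hdep : ∀ i f g, (∀ v ∈ vbl i, f v = g v) → A i f = A i g)
    (z : ℕ → ℝ) (hz : ∀ j, z j ∈ Set.Ioo (0 : ℝ) 1)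
    (hcond : ∀ j, (μ {ω | A j (fun v => ω (v, 0)) = true}).toReal ≤
      z j * ∏ l ∈ (((Finset.range Nev).filter
        (fun l => nbOf vbl j l = true)).erase j), (1 - z l))
    (i : ℕ) (T : List WRow) (hroot : T.head? = some (i, 0, 0)) :
    (μ {ω | ∃ t, mtLog Nev vbl A ω t = some i ∧
        mtTree Nev vbl A ω i t = T}).toReal ≤
      (z i / (1 - z i)) *
        gwProb z (fun j => (Finset.range Nev).filter
          (fun l => nbOf vbl j l = true)) T := by
  classical
  set NbF : ℕ → Finset ℕ :=
    fun j => (Finset.range Nev).filter (fun l => nbOf vbl j l = true) with hNbFdef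
  -- nonnegativity facts
  have hz1 : ∀ l, (0 : ℝ) ≤ 1 - z l := fun l => by have := (hz l).2; linarith
  have hgw0 : 0 ≤ gwProb z NbF T := by
    rw [gwProb_eq]
    refine Finset.prod_nonneg (fun k _ => Finset.prod_nonneg (fun l _ => ?_))
    by_cases h : l ∈ childLabels T k
    · rw [if_pos h]; exact le_of_lt (hz l).1
    · rw [if_neg h]; exact hz1 l
  have hfrac0 : 0 ≤ z i / (1 - z i) :=
    div_nonneg (le_of_lt (hz i).1) (hz1 i)
  -- root row of T
  have hrow0 : rowOf T 0 = (i, 0, 0) ∧ 0 < T.length := by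
    cases T with
    | nil => simp at hroot
    | cons a l =>
      rw [List.head?_cons, Option.some_inj] at hroot
      exact ⟨by rw [rowOf, ← hroot]; rfl, by simp⟩
  rcases Set.eq_empty_or_nonempty {ω : ℕ × ℕ → ℕ | ∃ t,
      mtLog Nev vbl A ω t = some i ∧ mtTree Nev vbl A ω i t = T} with hemp | ⟨ω₀, hω₀⟩
  · rw [hemp, measure_empty]
    simpa using mul_nonneg hfrac0 hgw0
  · obtain ⟨t₀, hlog₀, htree₀⟩ := hω₀
    have hiNev : i < Nev := (mtLog_true Nev vbl A ω₀ hlog₀).2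
    -- structural facts about T
    have hmonoT : ∀ x m m', m < m' → m' < T.length → x ∈ vbl (rowOf T m).1 →
        x ∈ vbl (rowOf T m').1 → (rowOf T m).2.1 < (rowOf T m').2.1 := by
      rw [← htree₀]
      exact fun x m m' h1 h2 h3 h4 => tree_mono Nev vbl A ω₀ i t₀ x m m' h1 h2 h3 h4
    have hstructT : ∀ k, 1 ≤ k → k < T.length → (rowOf T k).2.2 < k ∧
        (rowOf T k).2.1 = (rowOf T (rowOf T k).2.2).2.1 + 1 ∧
        nbOf vbl (rowOf T (rowOf T k).2.2).1 (rowOf T k).1 = true ∧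
        (rowOf T k).1 < Nev := by
      rw [← htree₀]
      exact fun k h1 h2 => tree_struct Nev vbl A ω₀ i t₀ k h1 h2
    -- event inclusion
    have hsub : {ω : ℕ × ℕ → ℕ | ∃ t, mtLog Nev vbl A ω t = some i ∧
        mtTree Nev vbl A ω i t = T} ⊆
        ⋂ k ∈ Finset.range T.length, {ω : ℕ × ℕ → ℕ |
          A ((rowOf T k).1) (fun x => ω (x, Dfn vbl T (rowOf T k).2.1 x)) = true} := by
      intro ω hω
      obtain ⟨t, hlog, htree⟩ := hω
      rw [Set.mem_iInter₂]
      intro k hk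
      have hk' : k < (mtTree Nev vbl A ω i t).length := by
        rw [htree]; exact Finset.mem_range.mp hk
      have := appears_mem Nev vbl A ω hdep i t hlog k hk'
      rw [htree] at this
      exact this
    -- disjointness of blocks
    have hdisjD : ∀ k k' x, k < T.length → k' < T.length → k ≠ k' →
        x ∈ vbl ((rowOf T k).1) → x ∈ vbl ((rowOf T k').1) →
        Dfn vbl T (rowOf T k).2.1 x ≠ Dfn vbl T (rowOf T k').2.1 x := by
      intro k k' x hk hk' hkk hx hx'
      rcases Nat.lt_or_ge k k' with h | h
      · exact (Dfn_lt vbl T x h hk' (fun m m' => hmonoT x m m') hx hx').ne'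
      · exact (Dfn_lt vbl T x (by omega) hk (fun m m' => hmonoT x m m') hx' hx).ne
    -- product formula
    have hprod := meas_blocks hiid vbl A hdep (fun k => (rowOf T k).1)
      (fun k x => Dfn vbl T (rowOf T k).2.1 x) T.length
      (fun k k' x h1 h2 h3 hx hx' => hdisjD k k' x h1 h2 h3 hx hx')
    have hmono1 : μ {ω : ℕ × ℕ → ℕ | ∃ t, mtLog Nev vbl A ω t = some i ∧
        mtTree Nev vbl A ω i t = T} ≤
        ∏ k ∈ Finset.range T.length, μ {ω : ℕ × ℕ → ℕ |
          A ((rowOf T k).1) (fun x => ω (x, Dfn vbl T (rowOf T k).2.1 x)) = true} := by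
      rw [← hprod]
      exact measure_mono hsub
    have hfin : (∏ k ∈ Finset.range T.length, μ {ω : ℕ × ℕ → ℕ |
        A ((rowOf T k).1) (fun x => ω (x, Dfn vbl T (rowOf T k).2.1 x)) = true}) ≠ ⊤ :=
      ENNReal.prod_ne_top (fun k _ => measure_ne_top μ _)
    have h2 : (μ {ω : ℕ × ℕ → ℕ | ∃ t, mtLog Nev vbl A ω t = some i ∧
        mtTree Nev vbl A ω i t = T}).toReal ≤
        ∏ k ∈ Finset.range T.length, (μ {ω : ℕ × ℕ → ℕ |
          A ((rowOf T k).1) (fun x => ω (x, Dfn vbl T (rowOf T k).2.1 x)) = true}).toReal := by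
      rw [← ENNReal.toReal_prod]
      exact ENNReal.toReal_mono hfin hmono1
    -- per-factor bound
    have hfac : ∀ k ∈ Finset.range T.length, (μ {ω : ℕ × ℕ → ℕ |
        A ((rowOf T k).1) (fun x => ω (x, Dfn vbl T (rowOf T k).2.1 x)) = true}).toReal ≤
        (z ((rowOf T k).1) / (1 - z ((rowOf T k).1))) *
          ∏ l ∈ NbF ((rowOf T k).1), (1 - z l) := by
      intro k _
      have hb := meas_block hiid vbl A hdep hident ((rowOf T k).1)
        (fun x => Dfn vbl T (rowOf T k).2.1 x)
      rw [hb]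
      calc (μ {ω : ℕ × ℕ → ℕ | A ((rowOf T k).1) (fun x => ω (x, 0)) = true}).toReal
          ≤ z ((rowOf T k).1) *
            ∏ l ∈ (NbF ((rowOf T k).1)).erase ((rowOf T k).1), (1 - z l) :=
            hcond ((rowOf T k).1)
        _ ≤ _ := zterm z hz _ _
    have h3 : (μ {ω : ℕ × ℕ → ℕ | ∃ t, mtLog Nev vbl A ω t = some i ∧
        mtTree Nev vbl A ω i t = T}).toReal ≤
        ∏ k ∈ Finset.range T.length, ((z ((rowOf T k).1) / (1 - z ((rowOf T k).1))) *
          ∏ l ∈ NbF ((rowOf T k).1), (1 - z l)) :=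
      le_trans h2 (Finset.prod_le_prod (fun k _ => ENNReal.toReal_nonneg) hfac)
    -- GW identity
    have hparT : ∀ k, 1 ≤ k → k < T.length → (rowOf T k).2.2 < k ∧
        (rowOf T k).1 ∈ NbF ((rowOf T (rowOf T k).2.2).1) := by
      intro k h1 h2
      obtain ⟨ha, hb', hc, hd⟩ := hstructT k h1 h2
      exact ⟨ha, Finset.mem_filter.mpr ⟨Finset.mem_range.mpr hd, hc⟩⟩
    have hsibT : ∀ k k', 1 ≤ k → k < k' → k' < T.length →
        (rowOf T k).2.2 = (rowOf T k').2.2 → (rowOf T k).1 ≠ (rowOf T k').1 := by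
      intro k k' h1 h2 h3 hpp heq
      obtain ⟨ha, hb', hc, hd⟩ := hstructT k h1 (by omega)
      obtain ⟨ha', hb'', hc', hd'⟩ := hstructT k' (by omega) h3
      have hnb : nbOf vbl ((rowOf T (rowOf T k).2.2).1) ((rowOf T k).1) = true := hc
      rw [nbOf, decide_eq_true_eq] at hnb
      obtain ⟨x, hx⟩ := hnb
      rw [Finset.mem_inter] at hx
      have hxk : x ∈ vbl ((rowOf T k).1) := hx.2
      have hxk' : x ∈ vbl ((rowOf T k').1) := by rw [← heq]; exact hx.2
      have := hmonoT x k k' h2 h3 hxk hxk'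
      rw [hb', hb'', ← hpp] at this
      omega
    have hgwid := gw_identity z hz NbF T (by rw [hrow0.1]) hparT hsibT
    -- assemble
    refine le_trans h3 (le_of_eq ?_)
    rw [hgwid, Finset.prod_mul_distrib]
    have h0mem : (0 : ℕ) ∈ Finset.range T.length := Finset.mem_range.mpr hrow0.2
    rw [← Finset.mul_prod_erase (Finset.range T.length)
      (fun k => z ((rowOf T k).1) / (1 - z ((rowOf T k).1))) h0mem]
    rw [hrow0.1]
    ring
end

section
/- Infinite Moser–Tardos chain lemma: Suppose at time T_k all of A_1,...,A_k are false and the algorithm always resamples the true event of minimal index. If some A_i with i ≤ k is resampled at a time t > T_k, then the witness tree of that resampling contains a chain of vertices from the root (labeled A_i) to a vertex labeled A_s with s > k, where consecutive events in the chain are neighbors. Consequently, if A_1,...,A_k contain all events within distance m of A_i in the neighborhood graph, the witness tree has at least m vertices. -/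
open MeasureTheory ProbabilityTheory

/-- `withinDist Nb m a b` means that `b` is within distance `m` of `a` in the
neighborhood graph given by `Nb`. -/
def withinDist (Nb : ℕ → ℕ → Bool) : ℕ → ℕ → ℕ → Prop
  | 0, a, b => a = b
  | m + 1, a, b => a = b ∨ ∃ c, Nb a c = true ∧ withinDist Nb m c b

/-! ### Auxiliary lemmas -/

lemma withinDist_refl (Nb : ℕ → ℕ → Bool) (m a : ℕ) : withinDist Nb m a a := by
  cases m with
  | zero => rfl
  | succ n => exact Or.inl rfl

lemma withinDist_succ (Nb : ℕ → ℕ → Bool) {m a b : ℕ} (h : withinDist Nb m a b) :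
    withinDist Nb (m + 1) a b := by
  induction m generalizing a with
  | zero => exact Or.inl h
  | succ n ih =>
    rcases h with h | ⟨c, hc, hcb⟩
    · exact Or.inl h
    · exact Or.inr ⟨c, hc, ih hcb⟩

lemma withinDist_mono (Nb : ℕ → ℕ → Bool) {m₁ m₂ a b : ℕ} (h : withinDist Nb m₁ a b)
    (hle : m₁ ≤ m₂) : withinDist Nb m₂ a b := by
  induction hle with
  | refl => exact h
  | step _ ih => exact withinDist_succ Nb ih

lemma withinDist_snoc (Nb : ℕ → ℕ → Bool) {m a c b : ℕ} (h : withinDist Nb m a c)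
    (hnb : Nb c b = true) : withinDist Nb (m + 1) a b := by
  induction m generalizing a with
  | zero =>
    have h' : a = c := h
    subst h'
    exact Or.inr ⟨b, hnb, rfl⟩
  | succ n ih =>
    rcases h with h | ⟨d, hd, hdc⟩
    · subst h
      exact Or.inr ⟨b, hnb, withinDist_refl Nb _ _⟩
    · exact Or.inr ⟨d, hd, ih hdc⟩

lemma mem_wstep (Nb : ℕ → ℕ → Bool) {r : WRow} {vs : List WRow} (s : ℕ) (h : r ∈ vs) :
    r ∈ wstep Nb vs s := by
  unfold wstep
  split
  · exact h
  · exact List.mem_append_left _ h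

lemma mem_foldl_wstep (Nb : ℕ → ℕ → Bool) {r : WRow} :
    ∀ (L : List ℕ) (vs : List WRow), r ∈ vs → r ∈ L.foldl (wstep Nb) vs
  | [], _, h => h
  | s :: L, vs, h => mem_foldl_wstep Nb L _ (mem_wstep Nb s h)

lemma label_mem_wstep (Nb : ℕ → ℕ → Bool) {r : WRow} {vs : List WRow} {s : ℕ}
    (hr : r ∈ vs) (hnb : Nb r.1 s = true) : ∃ r' ∈ wstep Nb vs s, r'.1 = s := by
  have hne : (vs.zipIdx.map Prod.swap).filter (fun q => Nb q.2.1 s) ≠ [] := by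
    obtain ⟨p, hp, hget⟩ := List.mem_iff_getElem.mp hr
    have hmem : (p, r) ∈ vs.zipIdx.map Prod.swap := by
      rw [List.mem_map]
      exact ⟨(r, p), List.mem_zipIdx_iff_getElem?.mpr (List.getElem?_eq_some_iff.mpr ⟨hp, hget⟩), rfl⟩
    exact List.ne_nil_of_mem (List.mem_filter.mpr ⟨hmem, hnb⟩)
  unfold wstep
  split
  · next heq => exact absurd (List.argmax_eq_none.mp heq) hne
  · next q heq => exact ⟨(s, q.2.2.1 + 1, q.1), List.mem_append_right _ (by simp), rfl⟩

/-- The invariant maintained by the witness-tree construction. -/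
def WInv (Nb : ℕ → ℕ → Bool) (root : ℕ) (P : ℕ → Prop) (vs : List WRow) : Prop :=
  (∀ r ∈ vs, P r.1 ∧ withinDist Nb r.2.1 root r.1) ∧
  ∀ (p : ℕ) (h : p < vs.length), vs[p].2.1 ≤ p

lemma wstep_inv_s16 {Nb : ℕ → ℕ → Bool} {root : ℕ} {P : ℕ → Prop} {vs : List WRow} {s : ℕ}
    (hInv : WInv Nb root P vs) (hs : P s) : WInv Nb root P (wstep Nb vs s) := by
  unfold wstep
  split
  · exact hInv
  · next q heq =>
    have hq := List.argmax_mem heq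
    have hqf := List.mem_filter.mp hq
    have hnb : Nb q.2.1 s = true := hqf.2
    obtain ⟨a, ha, hqa⟩ := List.mem_map.mp hqf.1
    have hqf1 : vs[q.1]? = some q.2 := by
      rw [← hqa]
      exact List.mem_zipIdx_iff_getElem?.mp ha
    obtain ⟨hqlt, hqeq⟩ := List.getElem?_eq_some_iff.mp hqf1
    have hq2 : q.2 ∈ vs := hqeq ▸ List.getElem_mem _
    have hdep : q.2.2.1 ≤ q.1 := by
      have := hInv.2 q.1 hqlt
      rw [hqeq] at this
      exact this
    constructor
    · intro r hr
      rcases List.mem_append.mp hr with hr | hr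
      · exact hInv.1 r hr
      · have : r = (s, q.2.2.1 + 1, q.1) := by simpa using hr
        subst this
        exact ⟨hs, withinDist_snoc Nb (hInv.1 q.2 hq2).2 hnb⟩
    · intro p h
      have hlen : p < vs.length + 1 := by simpa using h
      rcases Nat.lt_or_ge p vs.length with hp | hp
      · rw [List.getElem_append_left hp]
        exact hInv.2 p hp
      · have hpe : p = vs.length := by
          simp only [List.length_append, List.length_cons, List.length_nil] at h
          omega
        subst hpe
        rw [List.getElem_append_right (le_refl _)]
        simpa using by omega
      
lemma foldl_inv {Nb : ℕ → ℕ → Bool} {root : ℕ} {P : ℕ → Prop} :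
    ∀ (L : List ℕ) (vs : List WRow), (∀ s ∈ L, P s) → WInv Nb root P vs →
      WInv Nb root P (L.foldl (wstep Nb) vs)
  | [], _, _, h => h
  | s :: L, vs, hL, h =>
    foldl_inv L _ (fun x hx => hL x (List.mem_cons_of_mem _ hx))
      (wstep_inv_s16 h (hL s List.mem_cons_self))

lemma wbuild_inv {Nb : ℕ → ℕ → Bool} {root : ℕ} {P : ℕ → Prop} (L : List ℕ)
    (hL : ∀ s ∈ L, P s) (hroot : P root) : WInv Nb root P (wbuild Nb root L) := by
  refine foldl_inv L _ hL ⟨?_, ?_⟩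
  · intro r hr
    have : r = (root, 0, 0) := by simpa using hr
    subst this
    exact ⟨hroot, withinDist_refl Nb 0 root⟩
  · intro p h
    have : p = 0 := by simpa using h
    subst this
    simp

/-! ### Moser–Tardos algorithm lemmas -/

lemma mtLog_spec (Nev : ℕ) (vbl : ℕ → Finset ℕ) (A : ℕ → (ℕ → ℕ) → Bool)
    (ω : ℕ × ℕ → ℕ) {u j : ℕ} (h : mtLog Nev vbl A ω u = some j) :
    j < Nev ∧ A j (fun v => ω (v, mtCnt Nev vbl A ω u v)) = true := by
  unfold mtLog mtPick at h
  have h2 := List.find?_some h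
  exact ⟨List.mem_range.mp (List.mem_of_find?_eq_some h), h2⟩

lemma mtCnt_succ (Nev : ℕ) (vbl : ℕ → Finset ℕ) (A : ℕ → (ℕ → ℕ) → Bool)
    (ω : ℕ × ℕ → ℕ) (u : ℕ) :
    mtCnt Nev vbl A ω (u + 1) =
      (match mtLog Nev vbl A ω u with
       | none => mtCnt Nev vbl A ω u
       | some i => fun v => if v ∈ vbl i then mtCnt Nev vbl A ω u v + 1
                            else mtCnt Nev vbl A ω u v) := rfl

lemma mtCnt_succ_none (Nev : ℕ) (vbl : ℕ → Finset ℕ) (A : ℕ → (ℕ → ℕ) → Bool)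
    (ω : ℕ × ℕ → ℕ) {u : ℕ} (h : mtLog Nev vbl A ω u = none) :
    mtCnt Nev vbl A ω (u + 1) = mtCnt Nev vbl A ω u := by
  rw [mtCnt_succ, h]

lemma mtCnt_succ_some (Nev : ℕ) (vbl : ℕ → Finset ℕ) (A : ℕ → (ℕ → ℕ) → Bool)
    (ω : ℕ × ℕ → ℕ) {u j : ℕ} (h : mtLog Nev vbl A ω u = some j) (v : ℕ)
    (hv : v ∉ vbl j) : mtCnt Nev vbl A ω (u + 1) v = mtCnt Nev vbl A ω u v := by
  rw [mtCnt_succ, h]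
  simp [hv]

lemma mtCnt_stable (Nev : ℕ) (vbl : ℕ → Finset ℕ) (A : ℕ → (ℕ → ℕ) → Bool)
    (ω : ℕ × ℕ → ℕ) {j t₀ : ℕ} :
    ∀ t', t₀ ≤ t' →
      (∀ u j', t₀ ≤ u → u < t' → mtLog Nev vbl A ω u = some j' →
        ¬(vbl j' ∩ vbl j).Nonempty) →
      ∀ v ∈ vbl j, mtCnt Nev vbl A ω t' v = mtCnt Nev vbl A ω t₀ v := by
  intro t' hle
  induction t', hle using Nat.le_induction with
  | base => intro _ _ _; rfl
  | succ n hn ih =>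
    intro hemp v hv
    have ihv := ih (fun u j' hu hun => hemp u j' hu (by omega)) v hv
    cases hl : mtLog Nev vbl A ω n with
    | none => rw [mtCnt_succ_none Nev vbl A ω hl, ihv]
    | some j' =>
      have hvn : v ∉ vbl j' := fun hv' =>
        hemp n j' hn (by omega) hl ⟨v, Finset.mem_inter.mpr ⟨hv', hv⟩⟩
      rw [mtCnt_succ_some Nev vbl A ω hl v hvn, ihv]

lemma exists_nbr (Nev : ℕ) (vbl : ℕ → Finset ℕ) (A : ℕ → (ℕ → ℕ) → Bool)
    (ω : ℕ × ℕ → ℕ)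
    (hdep : ∀ i f g, (∀ v ∈ vbl i, f v = g v) → A i f = A i g)
    {j t₀ t' : ℕ} (hle : t₀ ≤ t')
    (h0 : A j (fun v => ω (v, mtCnt Nev vbl A ω t₀ v)) = false)
    (h1 : A j (fun v => ω (v, mtCnt Nev vbl A ω t' v)) = true) :
    ∃ u j', t₀ ≤ u ∧ u < t' ∧ mtLog Nev vbl A ω u = some j' ∧
      (vbl j' ∩ vbl j).Nonempty := by
  by_contra hc
  push_neg at hc
  have hcnt := mtCnt_stable Nev vbl A ω t' hle
    (fun u j' hu hut hl => Finset.not_nonempty_iff_eq_empty.mpr (hc u j' hu hut hl))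
  have heq : A j (fun v => ω (v, mtCnt Nev vbl A ω t' v)) =
      A j (fun v => ω (v, mtCnt Nev vbl A ω t₀ v)) :=
    hdep j _ _ (fun v hv => by rw [hcnt v hv])
  rw [h1, h0] at heq
  exact Bool.noConfusion heq

/-- The reversed log of the steps in `[u, t)`. -/
def revLog (Nev : ℕ) (vbl : ℕ → Finset ℕ) (A : ℕ → (ℕ → ℕ) → Bool)
    (ω : ℕ × ℕ → ℕ) (t u : ℕ) : List ℕ :=
  ((List.range' u (t - u)).filterMap (mtLog Nev vbl A ω)).reverse

lemma revLog_zero (Nev : ℕ) (vbl : ℕ → Finset ℕ) (A : ℕ → (ℕ → ℕ) → Bool)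
    (ω : ℕ × ℕ → ℕ) (t : ℕ) :
    revLog Nev vbl A ω t 0 = (mtList Nev vbl A ω t).reverse := by
  simp [revLog, mtList, List.range_eq_range']

lemma revLog_succ (Nev : ℕ) (vbl : ℕ → Finset ℕ) (A : ℕ → (ℕ → ℕ) → Bool)
    (ω : ℕ × ℕ → ℕ) {t u : ℕ} (h : u < t) :
    revLog Nev vbl A ω t u =
      revLog Nev vbl A ω t (u + 1) ++ (mtLog Nev vbl A ω u).toList := by
  obtain ⟨n, hn⟩ : ∃ n, t - u = n + 1 := ⟨t - u - 1, by omega⟩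
  have h2 : t - (u + 1) = n := by omega
  rw [revLog, revLog, hn, h2, List.range'_succ, List.filterMap_cons]
  cases hl : mtLog Nev vbl A ω u with
  | none => simp
  | some j => simp

/-- The tree built from the steps in `[u, t)`. -/
def treeU (Nev : ℕ) (vbl : ℕ → Finset ℕ) (A : ℕ → (ℕ → ℕ) → Bool)
    (ω : ℕ × ℕ → ℕ) (i t u : ℕ) : List WRow :=
  wbuild (nbOf vbl) i (revLog Nev vbl A ω t u)

lemma treeU_zero (Nev : ℕ) (vbl : ℕ → Finset ℕ) (A : ℕ → (ℕ → ℕ) → Bool)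
    (ω : ℕ × ℕ → ℕ) (i t : ℕ) :
    treeU Nev vbl A ω i t 0 = mtTree Nev vbl A ω i t := by
  rw [treeU, mtTree, revLog_zero]

lemma treeU_succ (Nev : ℕ) (vbl : ℕ → Finset ℕ) (A : ℕ → (ℕ → ℕ) → Bool)
    (ω : ℕ × ℕ → ℕ) (i : ℕ) {t u : ℕ} (h : u < t) :
    treeU Nev vbl A ω i t u =
      ((mtLog Nev vbl A ω u).toList).foldl (wstep (nbOf vbl))
        (treeU Nev vbl A ω i t (u + 1)) := by
  rw [treeU, treeU, wbuild, wbuild, revLog_succ Nev vbl A ω h, List.foldl_append]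

lemma treeU_mono (Nev : ℕ) (vbl : ℕ → Finset ℕ) (A : ℕ → (ℕ → ℕ) → Bool)
    (ω : ℕ × ℕ → ℕ) (i t : ℕ) {u' u : ℕ} (h1 : u' ≤ u) (h2 : u ≤ t) {r : WRow}
    (hr : r ∈ treeU Nev vbl A ω i t u) : r ∈ treeU Nev vbl A ω i t u' := by
  induction u, h1 using Nat.le_induction with
  | base => exact hr
  | succ n hn ih =>
    apply ih (by omega)
    rw [treeU_succ Nev vbl A ω i (show n < t by omega)]
    exact mem_foldl_wstep _ _ _ hr

lemma chain_reach (Nev : ℕ) (vbl : ℕ → Finset ℕ) (A : ℕ → (ℕ → ℕ) → Bool)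
    (ω : ℕ × ℕ → ℕ)
    (hdep : ∀ i f g, (∀ v ∈ vbl i, f v = g v) → A i f = A i g)
    {k t₀ t i : ℕ}
    (hfalse : ∀ j, j < k → A j (fun v => ω (v, mtCnt Nev vbl A ω t₀ v)) = false) :
    ∀ t', t₀ ≤ t' → t' < t → ∀ j, mtLog Nev vbl A ω t' = some j →
      (∃ r ∈ treeU Nev vbl A ω i t t', r.1 = j) →
      ∃ r ∈ treeU Nev vbl A ω i t 0, k ≤ r.1 := by
  intro t'
  induction t' using Nat.strong_induction_on with
  | _ t' ih =>
    intro h0 hlt j hlog hex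
    obtain ⟨r, hr, hrl⟩ := hex
    by_cases hjk : k ≤ j
    · exact ⟨r, treeU_mono Nev vbl A ω i t (Nat.zero_le _) (le_of_lt hlt) hr, hrl ▸ hjk⟩
    · push_neg at hjk
      have htrue := (mtLog_spec Nev vbl A ω hlog).2
      obtain ⟨u, j', hu0, hut, hul, hint⟩ :=
        exists_nbr Nev vbl A ω hdep h0 (hfalse j hjk) htrue
      have hnb : nbOf vbl r.1 j' = true := by
        rw [hrl]
        simp only [nbOf, decide_eq_true_eq]
        rwa [Finset.inter_comm]
      have hr1 : r ∈ treeU Nev vbl A ω i t (u + 1) :=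
        treeU_mono Nev vbl A ω i t (by omega) (by omega) hr
      have hstep : treeU Nev vbl A ω i t u =
          wstep (nbOf vbl) (treeU Nev vbl A ω i t (u + 1)) j' := by
        rw [treeU_succ Nev vbl A ω i (show u < t by omega), hul]
        rfl
      obtain ⟨r', hr', hr'l⟩ := label_mem_wstep (nbOf vbl) hr1 hnb
      exact ih u hut hu0 (by omega) j' hul ⟨r', hstep ▸ hr', hr'l⟩

/-- Infinite Moser–Tardos chain lemma.  Suppose at time `t₀` all of the events
`A 0, …, A (k-1)` are false (the algorithm resamples the true event of least
index).  If some `A i` with `i < k` is resampled at a time `t > t₀`, then its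
witness tree contains a vertex labeled by some event `A s` with `s ≥ k`
(reached from the root through a chain of neighbors, as every tree vertex is);
consequently, if all events within distance `m` of `A i` in the neighborhood
graph are among `A 0, …, A (k-1)`, the witness tree has at least `m`
vertices. -/
theorem chain_lemma
    (Nev : ℕ) (vbl : ℕ → Finset ℕ) (A : ℕ → (ℕ → ℕ) → Bool)
    (hdep : ∀ i f g, (∀ v ∈ vbl i, f v = g v) → A i f = A i g)
    (ω : ℕ × ℕ → ℕ) (k t₀ t i : ℕ)
    (hfalse : ∀ j, j < k → A j (fun v => ω (v, mtCnt Nev vbl A ω t₀ v)) = false)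
    (ht : t₀ < t) (hres : mtLog Nev vbl A ω t = some i) (hik : i < k) :
    (∃ r ∈ mtTree Nev vbl A ω i t, k ≤ r.1) ∧
      ∀ m, (∀ j, j < Nev → withinDist (nbOf vbl) m i j → j < k) →
        m ≤ (mtTree Nev vbl A ω i t).length := by
  have hspec := mtLog_spec Nev vbl A ω hres
  have hAt := hspec.2
  have hiNev := hspec.1
  have hAf := hfalse i hik
  obtain ⟨u, j', hu0, hut, hul, hint⟩ :=
    exists_nbr Nev vbl A ω hdep (le_of_lt ht) hAf hAt
  have hroot : ((i, 0, 0) : WRow) ∈ treeU Nev vbl A ω i t (u + 1) := by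
    rw [treeU, wbuild]
    exact mem_foldl_wstep _ _ _ (by simp)
  have hnb : nbOf vbl ((i, 0, 0) : WRow).1 j' = true := by
    simp only [nbOf, decide_eq_true_eq]
    rwa [Finset.inter_comm]
  have hstep : treeU Nev vbl A ω i t u =
      wstep (nbOf vbl) (treeU Nev vbl A ω i t (u + 1)) j' := by
    rw [treeU_succ Nev vbl A ω i (show u < t by omega), hul]
    rfl
  obtain ⟨r', hr', hr'l⟩ := label_mem_wstep (nbOf vbl) hroot hnb
  obtain ⟨r, hr, hkr⟩ := chain_reach Nev vbl A ω hdep hfalse u hu0 (by omega) j' hul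
    ⟨r', hstep ▸ hr', hr'l⟩
  rw [treeU_zero] at hr
  refine ⟨⟨r, hr, hkr⟩, ?_⟩
  intro m hm
  have hlab : ∀ s ∈ (mtList Nev vbl A ω t).reverse, s < Nev := by
    intro s hs
    rw [List.mem_reverse] at hs
    obtain ⟨u', _, hu'⟩ := List.mem_filterMap.mp hs
    exact (mtLog_spec Nev vbl A ω hu').1
  have hInv : WInv (nbOf vbl) i (· < Nev) (mtTree Nev vbl A ω i t) := by
    rw [mtTree]
    exact wbuild_inv _ hlab hiNev
  obtain ⟨hr1, hr2⟩ := hInv.1 r hr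
  obtain ⟨p, hp, hpe⟩ := List.mem_iff_getElem.mp hr
  have hdepth : r.2.1 ≤ p := by
    have := hInv.2 p hp
    rw [hpe] at this
    exact this
  by_contra hlen
  push_neg at hlen
  have hmle : r.2.1 ≤ m := by omega
  have := hm r.1 hr1 (withinDist_mono (nbOf vbl) hr2 hmle)
  omega
end

section
/- For every real number γ ∈ (0,1) and β with γ < β < 1, there exists M such that for all k ≥ M: 2^{−k} ≤ α · 2^{−βk} · ∏_{m ≥ M} (1 − 2^{−βm})^{k·2^{γm}} for some fixed α < 1; equivalently, 2^{−1} ≤ α · 2^{−β} · (1 − ∑_{m≥M} 2^{(γ−β)m}). -/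
set_option maxHeartbeats 1000000 in
/-- The numerical estimate behind Corollary 2: for `0 < γ < β < 1` there are
`α < 1` and `M` such that for all `k ≥ M`
`2⁻ᵏ ≤ α · 2^(-βk) · ∏_{m ≥ M} (1 - 2^(-βm))^(k · 2^(γm))`,
and equivalently `2⁻¹ ≤ α · 2^(-β) · (1 - ∑_{m ≥ M} 2^((γ-β)m))`. -/
theorem cnf_numerical_estimate (γ β : ℝ) (hγ : 0 < γ) (hγβ : γ < β)
    (hβ : β < 1) :
    ∃ α : ℝ, 0 < α ∧ α < 1 ∧ ∃ M : ℕ,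
      (∀ k : ℕ, M ≤ k →
        (2 : ℝ) ^ (-(k : ℝ)) ≤ α * (2 : ℝ) ^ (-(β * k)) *
          ∏' m : ℕ, (1 - (2 : ℝ) ^ (-(β * ((M : ℝ) + m)))) ^
            ((k : ℝ) * (2 : ℝ) ^ (γ * ((M : ℝ) + m)))) ∧
      (2 : ℝ)⁻¹ ≤ α * (2 : ℝ) ^ (-β) *
        (1 - ∑' m : ℕ, (2 : ℝ) ^ ((γ - β) * ((M : ℝ) + m))) := by
  have h2 : (0 : ℝ) < 2 := by norm_num
  set L : ℝ := Real.log 2 with hLdef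
  have hL : 0 < L := Real.log_pos (by norm_num)
  set r : ℝ := (2 : ℝ) ^ (γ - β) with hrdef
  have hr0 : 0 < r := Real.rpow_pos_of_pos h2 _
  have hr1 : r < 1 := Real.rpow_lt_one_of_one_lt_of_neg (by norm_num) (by linarith)
  set a0 : ℝ := (2 : ℝ) ^ (β - 1) with ha0def
  have ha00 : 0 < a0 := Real.rpow_pos_of_pos h2 _
  have ha01 : a0 < 1 := Real.rpow_lt_one_of_one_lt_of_neg (by norm_num) (by linarith)
  set α : ℝ := (1 + a0) / 2 with hαdef
  have hα0 : 0 < α := by rw [hαdef]; linarith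
  have hα1 : α < 1 := by rw [hαdef]; linarith
  have hαa : a0 < α := by rw [hαdef]; linarith
  refine ⟨α, hα0, hα1, ?_⟩
  -- constants
  set c1 : ℝ := (1 - β) * L / 4 with hc1def
  have hc1 : 0 < c1 := by
    rw [hc1def]
    have : 0 < (1 - β) * L := mul_pos (by linarith) hL
    linarith
  set c2 : ℝ := 1 - a0 / α with hc2def
  have hc2 : 0 < c2 := by
    have : a0 / α < 1 := (div_lt_one hα0).2 hαa
    rw [hc2def]; linarith
  set ε : ℝ := min c1 c2 with hεdef
  have hε : 0 < ε := lt_min hc1 hc2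
  obtain ⟨N1, hN1⟩ := exists_pow_lt_of_lt_one (mul_pos hε (by linarith : (0:ℝ) < 1 - r)) hr1
  obtain ⟨N2, hN2⟩ := exists_nat_ge (2 * (-Real.log α) / ((1 - β) * L))
  obtain ⟨N3, hN3⟩ := exists_nat_ge (1 / β)
  set M : ℕ := max (max N1 N2) N3 with hMdef
  have hMN1 : N1 ≤ M := le_trans (le_max_left _ _) (le_max_left _ _)
  have hMN2 : (N2 : ℝ) ≤ M := by exact_mod_cast le_trans (le_max_right _ _) (le_max_left _ _)
  have hMN3 : (N3 : ℝ) ≤ M := by exact_mod_cast le_max_right _ _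
  -- `S` computations
  have hterm : ∀ m : ℕ, (2 : ℝ) ^ ((γ - β) * ((M : ℝ) + m)) = r ^ M * r ^ m := by
    intro m
    rw [mul_add, Real.rpow_add h2]
    congr 1 <;>
      rw [hrdef, Real.rpow_mul (by norm_num : (0:ℝ) ≤ 2), Real.rpow_natCast]
  set S : ℝ := r ^ M * (1 - r)⁻¹ with hSdef
  have hS0 : 0 < S := mul_pos (pow_pos hr0 M) (inv_pos.2 (by linarith))
  have hSsum : ∑' m : ℕ, (2 : ℝ) ^ ((γ - β) * ((M : ℝ) + m)) = S := by
    rw [tsum_congr hterm, tsum_mul_left, tsum_geometric_of_lt_one hr0.le hr1]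
  have hSε : S ≤ ε := by
    have hrM : r ^ M ≤ r ^ N1 := pow_le_pow_of_le_one hr0.le hr1.le hMN1
    rw [hSdef, ← div_eq_mul_inv, div_le_iff₀ (by linarith : (0:ℝ) < 1 - r)]
    nlinarith
  have hSc1 : S ≤ c1 := hSε.trans (min_le_left _ _)
  have hSc2 : S ≤ c2 := hSε.trans (min_le_right _ _)
  -- the α bound from N2
  have hαM : Real.exp (-((M : ℝ) * ((1 - β) * L) / 2)) ≤ α := by
    have hD : 0 < (1 - β) * L := mul_pos (by linarith) hL
    have h1 : 2 * (-Real.log α) ≤ (N2 : ℝ) * ((1 - β) * L) := by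
      rw [div_le_iff₀ hD] at hN2; linarith
    have h2' : (N2 : ℝ) * ((1 - β) * L) ≤ (M : ℝ) * ((1 - β) * L) :=
      mul_le_mul_of_nonneg_right hMN2 hD.le
    calc Real.exp (-((M : ℝ) * ((1 - β) * L) / 2)) ≤ Real.exp (Real.log α) := by
          apply Real.exp_le_exp.2; linarith
      _ = α := Real.exp_log hα0
  -- β * M ≥ 1
  have hβM : 1 ≤ β * (M : ℝ) := by
    have hβ0 : 0 < β := hγ.trans hγβ
    have h' : 1 / β ≤ (M : ℝ) := hN3.trans hMN3
    rw [div_le_iff₀ hβ0] at h'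
    linarith
  refine ⟨M, ?_, ?_⟩
  · -- main inequality
    intro k hk
    have hk0 : (0 : ℝ) ≤ (k : ℝ) := Nat.cast_nonneg k
    have hkM : (M : ℝ) ≤ (k : ℝ) := Nat.cast_le.2 hk
    set h : ℕ → ℝ := fun m => (2 : ℝ) ^ (-(β * ((M : ℝ) + m))) with hhdef
    set s : ℕ → ℝ := fun m => (k : ℝ) * (2 : ℝ) ^ (γ * ((M : ℝ) + m)) with hsdef
    set f : ℕ → ℝ := fun m => (1 - h m) ^ (s m) with hfdef
    have hh0 : ∀ m, 0 < h m := fun m => Real.rpow_pos_of_pos h2 _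
    have hhhalf : ∀ m, h m ≤ 1 / 2 := by
      intro m
      have h1 : 1 ≤ β * ((M : ℝ) + m) := by
        have : β * (M : ℝ) ≤ β * ((M : ℝ) + m) := by
          apply mul_le_mul_of_nonneg_left _ (by linarith : (0:ℝ) ≤ β)
          have : (0:ℝ) ≤ (m : ℝ) := Nat.cast_nonneg m
          linarith
        linarith
      have : h m ≤ (2 : ℝ) ^ (-(1 : ℝ)) := by
        apply Real.rpow_le_rpow_of_exponent_le (by norm_num)
        linarith
      rwa [Real.rpow_neg_one, show ((2:ℝ)⁻¹ = 1/2) by norm_num] at this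
    have hbase : ∀ m, (0 : ℝ) < 1 - h m := fun m => by have := hhhalf m; linarith
    have hf0 : ∀ m, 0 < f m := fun m => Real.rpow_pos_of_pos (hbase m) _
    have hs0 : ∀ m, 0 ≤ s m := fun m => by positivity
    have hlogf : ∀ m, Real.log (f m) = s m * Real.log (1 - h m) := fun m =>
      Real.log_rpow (hbase m) _
    -- bound on -log(1-h)
    have hlogbound : ∀ m, -Real.log (1 - h m) ≤ 2 * h m := by
      intro m
      have hinv : (1 - h m)⁻¹ ≤ 2 := by
        rw [inv_le_comm₀ (hbase m) (by norm_num)]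
        have := hhhalf m; linarith
      have h1 : Real.log (1 - h m)⁻¹ ≤ (1 - h m)⁻¹ - 1 :=
        Real.log_le_sub_one_of_pos (inv_pos.2 (hbase m))
      rw [Real.log_inv] at h1
      have hmul : 1 ≤ (1 + 2 * h m) * (1 - h m) := by nlinarith [hh0 m, hhhalf m]
      have h3 : (1 - h m)⁻¹ ≤ 1 + 2 * h m := by
        rw [inv_eq_one_div, div_le_iff₀ (hbase m)]
        linarith
      linarith
    -- s m * h m = k * r^M * r^m
    have hsh : ∀ m, s m * h m = (k : ℝ) * (r ^ M * r ^ m) := by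
      intro m
      have : (2 : ℝ) ^ (γ * ((M : ℝ) + m)) * (2 : ℝ) ^ (-(β * ((M : ℝ) + m)))
          = (2 : ℝ) ^ ((γ - β) * ((M : ℝ) + m)) := by
        rw [← Real.rpow_add h2]; congr 1; ring
      simp only [hsdef, hhdef]
      rw [mul_assoc, this, hterm m]
    -- summability of the log bounds
    have hgsum : Summable (fun m : ℕ => 2 * (k : ℝ) * r ^ M * r ^ m) :=
      (summable_geometric_of_lt_one hr0.le hr1).mul_left _
    have hneglog_nonneg : ∀ m, 0 ≤ -Real.log (f m) := by
      intro m
      rw [hlogf m]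
      have : Real.log (1 - h m) ≤ 0 :=
        Real.log_nonpos (by linarith [hbase m]) (by linarith [hh0 m])
      nlinarith [hs0 m]
    have hneglog_le : ∀ m, -Real.log (f m) ≤ 2 * (k : ℝ) * r ^ M * r ^ m := by
      intro m
      rw [hlogf m]
      calc -(s m * Real.log (1 - h m)) = s m * (-Real.log (1 - h m)) := by ring
        _ ≤ s m * (2 * h m) := mul_le_mul_of_nonneg_left (hlogbound m) (hs0 m)
        _ = 2 * (s m * h m) := by ring
        _ = 2 * ((k : ℝ) * (r ^ M * r ^ m)) := by rw [hsh m]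
        _ = 2 * (k : ℝ) * r ^ M * r ^ m := by ring
    have hneglog_sum : Summable (fun m => -Real.log (f m)) :=
      Summable.of_nonneg_of_le hneglog_nonneg hneglog_le hgsum
    have hlogsum : Summable (fun m => Real.log (f m)) := by
      simpa using hneglog_sum.neg
    -- product = exp (sum of logs)
    have hprod : ∏' m, f m = Real.exp (∑' m, Real.log (f m)) := by
      have hp : HasProd f (Real.exp (∑' m, Real.log (f m))) := by
        have h' := hlogsum.hasSum.rexp
        have he : Real.exp ∘ (fun m => Real.log (f m)) = f :=
          funext fun m => Real.exp_log (hf0 m)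
        rwa [he] at h'
      exact hp.tprod_eq
    -- lower bound on sum of logs
    have hgsum_eq : ∑' m : ℕ, 2 * (k : ℝ) * r ^ M * r ^ m = 2 * (k : ℝ) * S := by
      rw [tsum_mul_left, tsum_geometric_of_lt_one hr0.le hr1]
      simp only [hSdef]; ring
    have hsum_ge : -(2 * (k : ℝ) * S) ≤ ∑' m, Real.log (f m) := by
      have h1 : ∑' m, -Real.log (f m) ≤ ∑' m : ℕ, 2 * (k : ℝ) * r ^ M * r ^ m :=
        Summable.tsum_le_tsum hneglog_le hneglog_sum hgsum
      rw [tsum_neg, hgsum_eq] at h1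
      linarith
    have hSc1' : 2 * (k : ℝ) * S ≤ (k : ℝ) * ((1 - β) * L) / 2 := by
      have h' : 2 * S ≤ (1 - β) * L / 2 := by rw [hc1def] at hSc1; linarith
      nlinarith [mul_le_mul_of_nonneg_left h' hk0]
    have hP : Real.exp (-((k : ℝ) * ((1 - β) * L) / 2)) ≤ ∏' m, f m := by
      rw [hprod]
      apply Real.exp_le_exp.2
      have := hsum_ge
      linarith
    -- assemble
    have hα' : Real.exp (-((k : ℝ) * ((1 - β) * L) / 2)) ≤ α := by
      refine le_trans ?_ hαM
      apply Real.exp_le_exp.2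
      have h2' : (M : ℝ) * ((1 - β) * L) ≤ (k : ℝ) * ((1 - β) * L) :=
        mul_le_mul_of_nonneg_right hkM (mul_pos (by linarith) hL).le
      linarith
    have hrw1 : (2 : ℝ) ^ (-(k : ℝ)) = Real.exp (L * (-(k : ℝ))) :=
      Real.rpow_def_of_pos h2 _
    have hrw2 : (2 : ℝ) ^ (-(β * (k : ℝ))) = Real.exp (L * (-(β * (k : ℝ)))) :=
      Real.rpow_def_of_pos h2 _
    calc (2 : ℝ) ^ (-(k : ℝ))
        = Real.exp (-((k : ℝ) * ((1 - β) * L) / 2)) *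
            Real.exp (L * (-(β * (k : ℝ)))) *
            Real.exp (-((k : ℝ) * ((1 - β) * L) / 2)) := by
          rw [hrw1, ← Real.exp_add, ← Real.exp_add]; congr 1; ring
      _ ≤ α * (2 : ℝ) ^ (-(β * (k : ℝ))) * ∏' m, f m := by
          rw [hrw2]
          have hA : (0:ℝ) < Real.exp (-((k : ℝ) * ((1 - β) * L) / 2)) := Real.exp_pos _
          have hB : (0:ℝ) < Real.exp (L * (-(β * (k : ℝ)))) := Real.exp_pos _
          exact mul_le_mul (mul_le_mul_of_nonneg_right hα' hB.le) hP hA.le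
            (mul_pos hα0 hB).le
      _ = α * (2 : ℝ) ^ (-(β * (k : ℝ))) *
          ∏' m : ℕ, (1 - (2 : ℝ) ^ (-(β * ((M : ℝ) + m)))) ^
            ((k : ℝ) * (2 : ℝ) ^ (γ * ((M : ℝ) + m))) := rfl
  · -- second inequality
    rw [hSsum]
    have h1 : a0 / α ≤ 1 - S := by rw [hc2def] at hSc2; linarith
    have h2' : a0 ≤ α * (1 - S) := by
      have := mul_le_mul_of_nonneg_left h1 hα0.le
      rwa [mul_div_cancel₀ _ hα0.ne'] at this
    have hpow : a0 * (2 : ℝ) ^ (-β) = 2⁻¹ := by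
      rw [ha0def, ← Real.rpow_add h2, show β - 1 + -β = -1 by ring, Real.rpow_neg_one]
    have h3 : a0 * (2 : ℝ) ^ (-β) ≤ α * (1 - S) * (2 : ℝ) ^ (-β) :=
      mul_le_mul_of_nonneg_right h2' (Real.rpow_pos_of_pos h2 _).le
    rw [hpow] at h3
    calc (2 : ℝ)⁻¹ ≤ α * (1 - S) * (2 : ℝ) ^ (-β) := h3
      _ = α * (2 : ℝ) ^ (-β) * (1 - S) := by ring
end
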